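/- arXiv:2510.23608 — 3 statements merged into one kernel-verified Lean document; each statement's English description precedes it below -/
import Mathlib

section
/- Let F be a Finsler metric on an open set U ⊆ ℝ^n with spray coefficients G^i. Then F is a Douglas metric (its Douglas tensor vanishes identically) if and only if for every x ∈ U and all indices i, j, the function y ↦ G^i(x,y) y^j − G^j(x,y) y^i coincides on ℝ^n ∖ {0} with a homogeneous polynomial of degree 3 in the variables y^1,…,y^n. -/
open Set

noncomputable section

/-- Partial derivative in the `m`-th coordinate of a function on `ℝⁿ`. -/
def pd {n : ℕ} (m : Fin n) (f : (Fin n → ℝ) → ℝ) : (Fin n → ℝ) → ℝ :=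
  fun x => fderiv ℝ f x (Pi.single m 1)

/-- Partial derivative in `x^m` of a function of `(x, y)`. -/
def pdx {n : ℕ} (m : Fin n) (f : (Fin n → ℝ) → (Fin n → ℝ) → ℝ) :
    (Fin n → ℝ) → (Fin n → ℝ) → ℝ :=
  fun x y => fderiv ℝ (fun x' => f x' y) x (Pi.single m 1)

/-- Partial derivative in `y^m` of a function of `(x, y)`. -/
def pdy {n : ℕ} (m : Fin n) (f : (Fin n → ℝ) → (Fin n → ℝ) → ℝ) :
    (Fin n → ℝ) → (Fin n → ℝ) → ℝ :=
  fun x y => fderiv ℝ (f x) y (Pi.single m 1)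

/-- The square `F²` of a Finsler metric. -/
def Fsq {n : ℕ} (F : (Fin n → ℝ) → (Fin n → ℝ) → ℝ) : (Fin n → ℝ) → (Fin n → ℝ) → ℝ :=
  fun x y => (F x y) ^ 2

/-- Fundamental tensor `g_{ij} = (1/2) ∂²(F²)/∂y^i∂y^j`. -/
def fundTensor {n : ℕ} (F : (Fin n → ℝ) → (Fin n → ℝ) → ℝ) (i j : Fin n) :
    (Fin n → ℝ) → (Fin n → ℝ) → ℝ :=
  fun x y => (1 / 2) * pdy i (pdy j (Fsq F)) x y

/-- The fundamental tensor as a matrix, so that we may invert it. -/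
def gMatrix {n : ℕ} (F : (Fin n → ℝ) → (Fin n → ℝ) → ℝ) (x y : Fin n → ℝ) :
    Matrix (Fin n) (Fin n) ℝ :=
  Matrix.of fun i j => fundTensor F i j x y

/-- Spray coefficients `G^i = (1/4) g^{il} ( y^m ∂²(F²)/∂y^l∂x^m − ∂(F²)/∂x^l )`. -/
def spray {n : ℕ} (F : (Fin n → ℝ) → (Fin n → ℝ) → ℝ) (i : Fin n) :
    (Fin n → ℝ) → (Fin n → ℝ) → ℝ :=
  fun x y => (1 / 4) * ∑ l, (gMatrix F x y)⁻¹ i l *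
    ((∑ m, y m * pdy l (pdx m (Fsq F)) x y) - pdx l (Fsq F) x y)

/-- `F` is a Finsler metric on the open set `U ⊆ ℝⁿ`. -/
structure IsFinslerOn (n : ℕ) (U : Set (Fin n → ℝ))
    (F : (Fin n → ℝ) → (Fin n → ℝ) → ℝ) : Prop where
  isOpen : IsOpen U
  continuous : ContinuousOn (fun p : (Fin n → ℝ) × (Fin n → ℝ) => F p.1 p.2) (U ×ˢ univ)
  smooth : ContDiffOn ℝ (⊤ : ℕ∞) (fun p : (Fin n → ℝ) × (Fin n → ℝ) => F p.1 p.2)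
    (U ×ˢ {y : Fin n → ℝ | y ≠ 0})
  pos : ∀ x ∈ U, ∀ y : Fin n → ℝ, y ≠ 0 → 0 < F x y
  homog : ∀ x ∈ U, ∀ y : Fin n → ℝ, ∀ c : ℝ, 0 < c → F x (c • y) = c * F x y
  posdef : ∀ x ∈ U, ∀ y : Fin n → ℝ, y ≠ 0 → ∀ v : Fin n → ℝ, v ≠ 0 →
    0 < ∑ i, ∑ j, fundTensor F i j x y * v i * v j

/-- The Douglas tensor of a family of spray coefficients:
`D_j{}^i{}_{kl} = ∂³/∂y^j∂y^k∂y^l [ G^i − (1/(n+1)) (∂G^m/∂y^m) y^i ]`. -/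
def douglasOfSpray {n : ℕ} (G : Fin n → (Fin n → ℝ) → (Fin n → ℝ) → ℝ)
    (j i k l : Fin n) : (Fin n → ℝ) → (Fin n → ℝ) → ℝ :=
  pdy j (pdy k (pdy l (fun x y =>
    G i x y - (1 / ((n : ℝ) + 1)) * (∑ m, pdy m (G m) x y) * y i)))

/-- The Douglas tensor of a Finsler metric. -/
def douglasTensor {n : ℕ} (F : (Fin n → ℝ) → (Fin n → ℝ) → ℝ)
    (j i k l : Fin n) : (Fin n → ℝ) → (Fin n → ℝ) → ℝ :=
  douglasOfSpray (spray F) j i k l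

/-- `F` is a Douglas metric on `U`: its Douglas tensor vanishes identically. -/
def IsDouglas {n : ℕ} (U : Set (Fin n → ℝ)) (F : (Fin n → ℝ) → (Fin n → ℝ) → ℝ) : Prop :=
  ∀ x ∈ U, ∀ y : Fin n → ℝ, y ≠ 0 → ∀ j i k l : Fin n, douglasTensor F j i k l x y = 0

/-- Berwald curvature `B_j{}^i{}_{kl} = ∂³G^i/∂y^j∂y^k∂y^l`. -/
def berwaldCurv {n : ℕ} (F : (Fin n → ℝ) → (Fin n → ℝ) → ℝ) (j i k l : Fin n) :
    (Fin n → ℝ) → (Fin n → ℝ) → ℝ :=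
  pdy j (pdy k (pdy l (spray F i)))

/-- `F` is a Berwald metric on `U`. -/
def IsBerwald {n : ℕ} (U : Set (Fin n → ℝ)) (F : (Fin n → ℝ) → (Fin n → ℝ) → ℝ) : Prop :=
  ∀ x ∈ U, ∀ y : Fin n → ℝ, y ≠ 0 → ∀ j i k l : Fin n, berwaldCurv F j i k l x y = 0

/-- Landsberg curvature `L_{jkl} = −(1/2) F (∂F/∂y^i) B_j{}^i{}_{kl}`. -/
def landsberg {n : ℕ} (F : (Fin n → ℝ) → (Fin n → ℝ) → ℝ) (j k l : Fin n) :
    (Fin n → ℝ) → (Fin n → ℝ) → ℝ :=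
  fun x y => -(1 / 2) * F x y * ∑ i, pdy i F x y * berwaldCurv F j i k l x y

/-- `F` is a Landsberg metric on `U`. -/
def IsLandsberg {n : ℕ} (U : Set (Fin n → ℝ)) (F : (Fin n → ℝ) → (Fin n → ℝ) → ℝ) : Prop :=
  ∀ x ∈ U, ∀ y : Fin n → ℝ, y ≠ 0 → ∀ j k l : Fin n, landsberg F j k l x y = 0

/-- Cartan torsion `C_{ijk} = (1/4) ∂³(F²)/∂y^i∂y^j∂y^k`. -/
def cartan {n : ℕ} (F : (Fin n → ℝ) → (Fin n → ℝ) → ℝ) (i j k : Fin n) :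
    (Fin n → ℝ) → (Fin n → ℝ) → ℝ :=
  fun x y => (1 / 4) * pdy i (pdy j (pdy k (Fsq F))) x y

/-- `F` is Riemannian on `U`: its Cartan torsion vanishes identically. -/
def IsRiemannian {n : ℕ} (U : Set (Fin n → ℝ)) (F : (Fin n → ℝ) → (Fin n → ℝ) → ℝ) : Prop :=
  ∀ x ∈ U, ∀ y : Fin n → ℝ, y ≠ 0 → ∀ i j k : Fin n, cartan F i j k x y = 0

/-- Mean Berwald curvature `E_{jk} = (1/2) ∂³G^m/∂y^j∂y^k∂y^m`. -/
def meanBerwald {n : ℕ} (F : (Fin n → ℝ) → (Fin n → ℝ) → ℝ) (j k : Fin n) :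
    (Fin n → ℝ) → (Fin n → ℝ) → ℝ :=
  fun x y => (1 / 2) * ∑ m, pdy j (pdy k (pdy m (spray F m))) x y

/-- Angular metric `h_{jk} = g_{jk} − (∂F/∂y^j)(∂F/∂y^k)`. -/
def angular {n : ℕ} (F : (Fin n → ℝ) → (Fin n → ℝ) → ℝ) (j k : Fin n) :
    (Fin n → ℝ) → (Fin n → ℝ) → ℝ :=
  fun x y => fundTensor F j k x y - pdy j F x y * pdy k F x y

/-- `F` has isotropic mean Berwald curvature:
`E_{jk} = ((n+1)/2) c(x) F⁻¹ h_{jk}` for some function `c` on `U`. -/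
def HasIsotropicMeanBerwald {n : ℕ} (U : Set (Fin n → ℝ))
    (F : (Fin n → ℝ) → (Fin n → ℝ) → ℝ) : Prop :=
  ∃ c : (Fin n → ℝ) → ℝ, ∀ x ∈ U, ∀ y : Fin n → ℝ, y ≠ 0 → ∀ j k : Fin n,
    meanBerwald F j k x y = (((n : ℝ) + 1) / 2) * c x * (F x y)⁻¹ * angular F j k x y

/-- `F` has relatively isotropic Landsberg curvature:
`L_{jkl} + c(x) F C_{jkl} = 0` for some function `c` on `U`. -/
def HasRelIsotropicLandsberg {n : ℕ} (U : Set (Fin n → ℝ))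
    (F : (Fin n → ℝ) → (Fin n → ℝ) → ℝ) : Prop :=
  ∃ c : (Fin n → ℝ) → ℝ, ∀ x ∈ U, ∀ y : Fin n → ℝ, y ≠ 0 → ∀ j k l : Fin n,
    landsberg F j k l x y + c x * F x y * cartan F j k l x y = 0

/-- Nonlinear connection coefficients `N^i_m = ∂G^i/∂y^m`. -/
def Nconn {n : ℕ} (F : (Fin n → ℝ) → (Fin n → ℝ) → ℝ) (i m : Fin n) :
    (Fin n → ℝ) → (Fin n → ℝ) → ℝ :=
  pdy m (spray F i)

/-- Berwald connection coefficients `Γ^i_{jm} = ∂²G^i/∂y^j∂y^m`. -/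
def GammaConn {n : ℕ} (F : (Fin n → ℝ) → (Fin n → ℝ) → ℝ) (i j m : Fin n) :
    (Fin n → ℝ) → (Fin n → ℝ) → ℝ :=
  pdy j (pdy m (spray F i))

/-- Horizontal covariant derivative (Berwald connection) of a `(0,2)`-tensor. -/
def hcov2 {n : ℕ} (F : (Fin n → ℝ) → (Fin n → ℝ) → ℝ)
    (T : Fin n → Fin n → (Fin n → ℝ) → (Fin n → ℝ) → ℝ) (j k m : Fin n) :
    (Fin n → ℝ) → (Fin n → ℝ) → ℝ :=
  fun x y => pdx m (T j k) x y - (∑ s, Nconn F s m x y * pdy s (T j k) x y)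
    - (∑ s, T s k x y * GammaConn F s j m x y)
    - (∑ s, T j s x y * GammaConn F s k m x y)

/-- Horizontal covariant derivative (Berwald connection) of a `(0,3)`-tensor. -/
def hcov3 {n : ℕ} (F : (Fin n → ℝ) → (Fin n → ℝ) → ℝ)
    (T : Fin n → Fin n → Fin n → (Fin n → ℝ) → (Fin n → ℝ) → ℝ) (j k l m : Fin n) :
    (Fin n → ℝ) → (Fin n → ℝ) → ℝ :=
  fun x y => pdx m (T j k l) x y - (∑ s, Nconn F s m x y * pdy s (T j k l) x y)
    - (∑ s, T s k l x y * GammaConn F s j m x y)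
    - (∑ s, T j s l x y * GammaConn F s k m x y)
    - (∑ s, T j k s x y * GammaConn F s l m x y)

/-- Horizontal covariant derivative `D_j{}^i{}_{kl|m}` of the Douglas tensor. -/
def dougHCov {n : ℕ} (F : (Fin n → ℝ) → (Fin n → ℝ) → ℝ) (j i k l m : Fin n) :
    (Fin n → ℝ) → (Fin n → ℝ) → ℝ :=
  fun x y => pdx m (douglasTensor F j i k l) x y
    - (∑ s, Nconn F s m x y * pdy s (douglasTensor F j i k l) x y)
    + (∑ s, douglasTensor F j s k l x y * GammaConn F i s m x y)
    - (∑ s, douglasTensor F s i k l x y * GammaConn F s j m x y)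
    - (∑ s, douglasTensor F j i s l x y * GammaConn F s k m x y)
    - (∑ s, douglasTensor F j i k s x y * GammaConn F s l m x y)

/-- `F` is a generalized Douglas–Weyl (GDW) metric on `U`:
`D_j{}^i{}_{kl|m} y^m = T_{jkl} y^i` for some functions `T_{jkl}(x,y)`. -/
def IsGDW {n : ℕ} (U : Set (Fin n → ℝ)) (F : (Fin n → ℝ) → (Fin n → ℝ) → ℝ) : Prop :=
  ∃ T : Fin n → Fin n → Fin n → (Fin n → ℝ) → (Fin n → ℝ) → ℝ,
    ∀ x ∈ U, ∀ y : Fin n → ℝ, y ≠ 0 → ∀ j i k l : Fin n,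
      (∑ m, y m * dougHCov F j i k l m x y) = T j k l x y * y i

/-- Riemann curvature
`R^i{}_k = 2 ∂G^i/∂x^k − y^j ∂²G^i/∂x^j∂y^k + 2 G^j ∂²G^i/∂y^j∂y^k − (∂G^i/∂y^j)(∂G^j/∂y^k)`. -/
def riemannCurv {n : ℕ} (F : (Fin n → ℝ) → (Fin n → ℝ) → ℝ) (i k : Fin n) :
    (Fin n → ℝ) → (Fin n → ℝ) → ℝ :=
  fun x y => 2 * pdx k (spray F i) x y
    - (∑ j, y j * pdy k (pdx j (spray F i)) x y)
    + 2 * (∑ j, spray F j x y * pdy j (pdy k (spray F i)) x y)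
    - (∑ j, pdy j (spray F i) x y * pdy k (spray F j) x y)

/-- `F` is R-quadratic on `U`: each `y ↦ R^i{}_k(x,y)` is a homogeneous quadratic
polynomial in `y`. -/
def IsRQuadratic {n : ℕ} (U : Set (Fin n → ℝ)) (F : (Fin n → ℝ) → (Fin n → ℝ) → ℝ) : Prop :=
  ∀ x ∈ U, ∀ i k : Fin n, ∃ Q : Fin n → Fin n → ℝ, ∀ y : Fin n → ℝ, y ≠ 0 →
    riemannCurv F i k x y = ∑ p, ∑ q, Q p q * y p * y q

/-- Ricci curvature `Ric = R^m{}_m`. -/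
def ricciCurv {n : ℕ} (F : (Fin n → ℝ) → (Fin n → ℝ) → ℝ) :
    (Fin n → ℝ) → (Fin n → ℝ) → ℝ :=
  fun x y => ∑ m, riemannCurv F m m x y

/-- `F` is Ricci-flat on `U`. -/
def IsRicciFlat {n : ℕ} (U : Set (Fin n → ℝ)) (F : (Fin n → ℝ) → (Fin n → ℝ) → ℝ) : Prop :=
  ∀ x ∈ U, ∀ y : Fin n → ℝ, y ≠ 0 → ricciCurv F x y = 0

/-- `F` has reversible Douglas curvature on `U`. -/
def HasReversibleDouglas {n : ℕ} (U : Set (Fin n → ℝ))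
    (F : (Fin n → ℝ) → (Fin n → ℝ) → ℝ) : Prop :=
  ∀ x ∈ U, ∀ y : Fin n → ℝ, y ≠ 0 → ∀ j i k l : Fin n,
    douglasTensor F j i k l x (-y) = douglasTensor F j i k l x y

/-- A smooth positive definite symmetric matrix field (Riemannian metric) on `U`. -/
structure IsRiemMetricOn {n : ℕ} (U : Set (Fin n → ℝ))
    (a : (Fin n → ℝ) → Matrix (Fin n) (Fin n) ℝ) : Prop where
  smooth : ∀ i j : Fin n, ContDiffOn ℝ (⊤ : ℕ∞) (fun x => a x i j) U
  symm : ∀ x ∈ U, ∀ i j : Fin n, a x i j = a x j i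
  posdef : ∀ x ∈ U, ∀ v : Fin n → ℝ, v ≠ 0 → 0 < ∑ i, ∑ j, a x i j * v i * v j

/-- `α(x,y) = √(a_{ij}(x) y^i y^j)`. -/
def alphaOf {n : ℕ} (a : (Fin n → ℝ) → Matrix (Fin n) (Fin n) ℝ) :
    (Fin n → ℝ) → (Fin n → ℝ) → ℝ :=
  fun x y => Real.sqrt (∑ i, ∑ j, a x i j * y i * y j)

/-- `β(x,y) = b_i(x) y^i`. -/
def betaOf {n : ℕ} (b : (Fin n → ℝ) → Fin n → ℝ) :
    (Fin n → ℝ) → (Fin n → ℝ) → ℝ :=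
  fun x y => ∑ i, b x i * y i

/-- `‖β‖_α² (x) = a^{ij}(x) b_i(x) b_j(x)`. -/
def bNormSq {n : ℕ} (a : (Fin n → ℝ) → Matrix (Fin n) (Fin n) ℝ)
    (b : (Fin n → ℝ) → Fin n → ℝ) : (Fin n → ℝ) → ℝ :=
  fun x => ∑ i, ∑ j, (a x)⁻¹ i j * b x i * b x j

/-- Christoffel symbols `γ^i_{jk}` of the Levi-Civita connection of `a`. -/
def christoffel {n : ℕ} (a : (Fin n → ℝ) → Matrix (Fin n) (Fin n) ℝ) (i j k : Fin n) :
    (Fin n → ℝ) → ℝ :=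
  fun x => (1 / 2) * ∑ l, (a x)⁻¹ i l *
    (pd k (fun x' => a x' l j) x + pd j (fun x' => a x' l k) x - pd l (fun x' => a x' j k) x)

/-- Covariant derivative `b_{i|j}` of the 1-form `b` in the Levi-Civita connection of `a`. -/
def covDerivOneForm {n : ℕ} (a : (Fin n → ℝ) → Matrix (Fin n) (Fin n) ℝ)
    (b : (Fin n → ℝ) → Fin n → ℝ) (i j : Fin n) : (Fin n → ℝ) → ℝ :=
  fun x => pd j (fun x' => b x' i) x - ∑ s, christoffel a s i j x * b x s

/-- Ricci tensor of the Levi-Civita connection of `a`. -/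
def riemRicci {n : ℕ} (a : (Fin n → ℝ) → Matrix (Fin n) (Fin n) ℝ) (j k : Fin n) :
    (Fin n → ℝ) → ℝ :=
  fun x => ∑ i, (pd i (christoffel a i j k) x - pd k (christoffel a i j i) x
    + ∑ p, (christoffel a i i p x * christoffel a p j k x
      - christoffel a i k p x * christoffel a p j i x))

end

noncomputable section DouglasAux
namespace DouglasAux

open Set Filter Topology
open scoped ContDiff

variable {n : ℕ}

lemma one_le_inf : (∞ : WithTop ℕ∞) ≠ 0 := by
  simp

lemma inf_add_one_le : (∞ : WithTop ℕ∞) + 1 ≤ ∞ := by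
  exact_mod_cast (le_top : ((⊤ : ℕ∞) + 1 : ℕ∞) ≤ ⊤)

lemma pi_decomp (v : Fin n → ℝ) : ∑ m, v m • (Pi.single m 1 : Fin n → ℝ) = v := by
  funext j
  simp [Finset.sum_apply, Pi.single_apply]

lemma fderiv_apply_eq_sum (g : (Fin n → ℝ) → ℝ) (y v : Fin n → ℝ) :
    fderiv ℝ g y v = ∑ m, v m * pd m g y := by
  conv_lhs => rw [← pi_decomp v]
  rw [map_sum]
  exact Finset.sum_congr rfl fun m _ => by rw [map_smul, smul_eq_mul]; rfl

lemma pd_congr_nhds {f g : (Fin n → ℝ) → ℝ} {y : Fin n → ℝ} (m : Fin n)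
    (h : f =ᶠ[𝓝 y] g) : pd m f y = pd m g y := by
  unfold pd; rw [h.fderiv_eq]

lemma pd_eqOn {f g : (Fin n → ℝ) → ℝ} {s : Set (Fin n → ℝ)} (hs : IsOpen s)
    (h : EqOn f g s) (m : Fin n) : EqOn (pd m f) (pd m g) s := fun y hy =>
  pd_congr_nhds m ((eventually_of_mem (hs.mem_nhds hy) h : f =ᶠ[𝓝 y] g))

lemma contDiffAt_pd {g : (Fin n → ℝ) → ℝ} {y : Fin n → ℝ}
    (hg : ContDiffAt ℝ ∞ g y) (m : Fin n) : ContDiffAt ℝ ∞ (pd m g) y :=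
  (hg.fderiv_right inf_add_one_le).clm_apply contDiffAt_const

lemma pd_const (a : ℝ) (m : Fin n) (y : Fin n → ℝ) :
    pd m (fun _ => a) y = 0 := by
  unfold pd; rw [fderiv_fun_const]; rfl

lemma pd_add {f g : (Fin n → ℝ) → ℝ} {y : Fin n → ℝ}
    (hf : DifferentiableAt ℝ f y) (hg : DifferentiableAt ℝ g y) (m : Fin n) :
    pd m (fun z => f z + g z) y = pd m f y + pd m g y := by
  unfold pd; rw [fderiv_fun_add hf hg]; rfl

lemma pd_sub {f g : (Fin n → ℝ) → ℝ} {y : Fin n → ℝ}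
    (hf : DifferentiableAt ℝ f y) (hg : DifferentiableAt ℝ g y) (m : Fin n) :
    pd m (fun z => f z - g z) y = pd m f y - pd m g y := by
  unfold pd; rw [fderiv_fun_sub hf hg]; rfl

lemma pd_mul {f g : (Fin n → ℝ) → ℝ} {y : Fin n → ℝ}
    (hf : DifferentiableAt ℝ f y) (hg : DifferentiableAt ℝ g y) (m : Fin n) :
    pd m (fun z => f z * g z) y = pd m f y * g y + f y * pd m g y := by
  unfold pd
  rw [fderiv_fun_mul hf hg]
  simp [ContinuousLinearMap.add_apply, ContinuousLinearMap.smul_apply, smul_eq_mul]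
  ring

lemma pd_const_mul {f : (Fin n → ℝ) → ℝ} {y : Fin n → ℝ}
    (hf : DifferentiableAt ℝ f y) (a : ℝ) (m : Fin n) :
    pd m (fun z => a * f z) y = a * pd m f y := by
  unfold pd; rw [fderiv_const_mul hf]; rfl

lemma pd_sum {ι : Type*} {s : Finset ι} {f : ι → (Fin n → ℝ) → ℝ} {y : Fin n → ℝ}
    (hf : ∀ i ∈ s, DifferentiableAt ℝ (f i) y) (m : Fin n) :
    pd m (fun z => ∑ i ∈ s, f i z) y = ∑ i ∈ s, pd m (f i) y := by
  unfold pd; rw [fderiv_fun_sum hf]; simp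

lemma diff_eval (p : Fin n) : Differentiable ℝ (fun z : Fin n → ℝ => z p) :=
  (ContinuousLinearMap.proj p : (Fin n → ℝ) →L[ℝ] ℝ).differentiable

lemma pd_eval (p m : Fin n) (y : Fin n → ℝ) :
    pd m (fun z => z p) y = (Pi.single m 1 : Fin n → ℝ) p := by
  unfold pd
  rw [show (fun z : Fin n → ℝ => z p) = ⇑(ContinuousLinearMap.proj p :
      (Fin n → ℝ) →L[ℝ] ℝ) from rfl]
  rw [ContinuousLinearMap.fderiv]
  rfl

/-! ### Polynomial shapes -/

def S1 (c : Fin n → ℝ) : (Fin n → ℝ) → ℝ := fun z => ∑ p, c p * z p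

def S2 (B : Fin n → Fin n → ℝ) : (Fin n → ℝ) → ℝ := fun z => ∑ p, ∑ q, B p q * z p * z q

def S3 (C : Fin n → Fin n → Fin n → ℝ) : (Fin n → ℝ) → ℝ :=
  fun z => ∑ p, ∑ q, ∑ r, C p q r * z p * z q * z r

lemma diff_S1 (c : Fin n → ℝ) : Differentiable ℝ (S1 c) := by
  apply Differentiable.fun_sum
  intro p _
  exact (diff_eval p).const_mul _

lemma diff_S2 (B : Fin n → Fin n → ℝ) : Differentiable ℝ (S2 B) := by
  apply Differentiable.fun_sum; intro p _
  apply Differentiable.fun_sum; intro q _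
  exact (((diff_eval p).const_mul _).mul (diff_eval q))

lemma diff_S3 (C : Fin n → Fin n → Fin n → ℝ) : Differentiable ℝ (S3 C) := by
  apply Differentiable.fun_sum; intro p _
  apply Differentiable.fun_sum; intro q _
  apply Differentiable.fun_sum; intro r _
  exact ((((diff_eval p).const_mul _).mul (diff_eval q)).mul (diff_eval r))

lemma pd_S1 (c : Fin n → ℝ) (m : Fin n) (y : Fin n → ℝ) :
    pd m (S1 c) y = c m := by
  unfold S1
  rw [pd_sum (fun p _ => (diff_eval p).differentiableAt.const_mul _)]
  have h : ∀ p : Fin n, pd m (fun z => c p * z p) y = c p * (Pi.single m 1 : Fin n → ℝ) p := by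
    intro p
    rw [pd_const_mul (diff_eval p).differentiableAt, pd_eval]
  simp_rw [h, Pi.single_apply]
  simp

lemma pd_S2 (B : Fin n → Fin n → ℝ) (m : Fin n) (y : Fin n → ℝ) :
    pd m (S2 B) y = S1 (fun q => B m q + B q m) y := by
  unfold S2
  rw [pd_sum (fun p _ => by
    exact Differentiable.differentiableAt (by
      apply Differentiable.fun_sum; intro q _
      exact ((diff_eval p).const_mul _).mul (diff_eval q)))]
  have h : ∀ p : Fin n, pd m (fun z => ∑ q, B p q * z p * z q) y
      = (if p = m then ∑ q, B p q * y q else 0) + ∑ q, (if q = m then B p q * y p else 0) := by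
    intro p
    rw [pd_sum (fun q _ => (((diff_eval p).const_mul _).fun_mul (diff_eval q)).differentiableAt)]
    have h2 : ∀ q : Fin n, pd m (fun z => B p q * z p * z q) y
        = (if p = m then B p q * y q else 0) + (if q = m then B p q * y p else 0) := by
      intro q
      rw [show (fun z : Fin n → ℝ => B p q * z p * z q) = (fun z => (B p q * z p) * z q)
          from rfl,
        pd_mul ((diff_eval p).const_mul _).differentiableAt (diff_eval q).differentiableAt,
        pd_const_mul (diff_eval p).differentiableAt, pd_eval, pd_eval]
      simp only [Pi.single_apply, mul_ite, mul_one, mul_zero, ite_mul, zero_mul]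
      try (split_ifs <;> ring)
    rw [Finset.sum_congr rfl fun q _ => h2 q, Finset.sum_add_distrib]
    congr 1
    split_ifs <;> simp
  rw [Finset.sum_congr rfl fun p _ => h p, Finset.sum_add_distrib]
  unfold S1
  simp only [Finset.sum_ite_eq', Finset.mem_univ, if_true, add_mul, Finset.sum_add_distrib]

lemma pd_S3 (C : Fin n → Fin n → Fin n → ℝ) (m : Fin n) (y : Fin n → ℝ) :
    pd m (S3 C) y = S2 (fun q r => C m q r + C q m r + C q r m) y := by
  unfold S3
  rw [pd_sum (fun p _ => by
    exact Differentiable.differentiableAt (by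
      apply Differentiable.fun_sum; intro q _
      apply Differentiable.fun_sum; intro r _
      exact (((diff_eval p).const_mul _).mul (diff_eval q)).mul (diff_eval r)))]
  have h : ∀ p : Fin n, pd m (fun z => ∑ q, ∑ r, C p q r * z p * z q * z r) y
      = (if p = m then ∑ q, ∑ r, C p q r * y q * y r else 0)
        + ∑ q, (if q = m then ∑ r, C p q r * y p * y r else 0)
        + ∑ q, ∑ r, (if r = m then C p q r * y p * y q else 0) := by
    intro p
    rw [pd_sum (fun q _ => by
      exact Differentiable.differentiableAt (by
        apply Differentiable.fun_sum; intro r _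
        exact (((diff_eval p).const_mul _).mul (diff_eval q)).mul (diff_eval r)))]
    have h2 : ∀ q : Fin n, pd m (fun z => ∑ r, C p q r * z p * z q * z r) y
        = (if p = m then ∑ r, C p q r * y q * y r else 0)
          + (if q = m then ∑ r, C p q r * y p * y r else 0)
          + ∑ r, (if r = m then C p q r * y p * y q else 0) := by
      intro q
      rw [pd_sum (fun r _ =>
        ((((diff_eval p).const_mul _).fun_mul (diff_eval q)).fun_mul (diff_eval r)).differentiableAt)]
      have h3 : ∀ r : Fin n, pd m (fun z => C p q r * z p * z q * z r) y
          = (if p = m then C p q r * y q * y r else 0)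
            + (if q = m then C p q r * y p * y r else 0)
            + (if r = m then C p q r * y p * y q else 0) := by
        intro r
        rw [show (fun z : Fin n → ℝ => C p q r * z p * z q * z r)
            = (fun z => ((C p q r * z p) * z q) * z r) from rfl,
          pd_mul (((diff_eval p).const_mul _).fun_mul (diff_eval q)).differentiableAt
            (diff_eval r).differentiableAt,
          pd_mul ((diff_eval p).const_mul _).differentiableAt (diff_eval q).differentiableAt,
          pd_const_mul (diff_eval p).differentiableAt, pd_eval, pd_eval, pd_eval]
        simp only [Pi.single_apply, mul_ite, mul_one, mul_zero, ite_mul, zero_mul]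
        try (split_ifs <;> ring)
      rw [Finset.sum_congr rfl fun r _ => h3 r, Finset.sum_add_distrib,
        Finset.sum_add_distrib]
      congr 2
      · split_ifs <;> simp [Finset.mul_sum]
      · split_ifs <;> simp [Finset.mul_sum]
    rw [Finset.sum_congr rfl fun q _ => h2 q, Finset.sum_add_distrib, Finset.sum_add_distrib]
    congr 2
    split_ifs <;> simp
  rw [Finset.sum_congr rfl fun p _ => h p, Finset.sum_add_distrib, Finset.sum_add_distrib]
  unfold S2
  simp only [Finset.sum_ite_eq', Finset.mem_univ, if_true, add_mul, Finset.sum_add_distrib]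
/-! ### Euler, homogeneity, constancy -/

lemma euler {g : (Fin n → ℝ) → ℝ} {y : Fin n → ℝ} (d : ℕ)
    (hg : DifferentiableAt ℝ g y)
    (hh : ∀ c : ℝ, 0 < c → g (c • y) = c ^ d * g y) :
    ∑ m, y m * pd m g y = (d : ℝ) * g y := by
  have hcurve : HasDerivAt (fun c : ℝ => c • y) ((1:ℝ) • y) 1 :=
    (hasDerivAt_id (1:ℝ)).smul_const y
  have hg' : HasFDerivAt g (fderiv ℝ g y) ((1:ℝ) • y) := by
    rw [one_smul]; exact hg.hasFDerivAt
  have h1 : HasDerivAt (fun c : ℝ => g (c • y)) (fderiv ℝ g y ((1:ℝ) • y)) 1 :=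
    hg'.comp_hasDerivAt 1 hcurve
  have h2 : HasDerivAt (fun c : ℝ => c ^ d * g y) ((d : ℝ) * g y) 1 := by
    simpa using (hasDerivAt_pow d (1:ℝ)).mul_const (g y)
  have heq : (fun c : ℝ => g (c • y)) =ᶠ[𝓝 (1:ℝ)] (fun c => c ^ d * g y) := by
    have hmem : {c : ℝ | 0 < c} ∈ 𝓝 (1:ℝ) :=
      (isOpen_lt continuous_const continuous_id).mem_nhds (by norm_num)
    exact eventually_of_mem hmem fun c hc => hh c hc
  have h3 : HasDerivAt (fun c : ℝ => g (c • y)) ((d : ℝ) * g y) 1 :=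
    h2.congr_of_eventuallyEq heq
  have h4 : fderiv ℝ g y ((1:ℝ) • y) = (d : ℝ) * g y := h1.unique h3
  rw [one_smul] at h4
  rw [← h4, fderiv_apply_eq_sum]

lemma pd_homog {g : (Fin n → ℝ) → ℝ} (d : ℕ)
    (hg : ∀ y : Fin n → ℝ, y ≠ 0 → DifferentiableAt ℝ g y)
    (hh : ∀ c : ℝ, 0 < c → ∀ y : Fin n → ℝ, y ≠ 0 → g (c • y) = c ^ (d + 1) * g y)
    (m : Fin n) :
    ∀ c : ℝ, 0 < c → ∀ y : Fin n → ℝ, y ≠ 0 → pd m g (c • y) = c ^ d * pd m g y := by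
  intro c hc y hy
  have hcy : c • y ≠ 0 := smul_ne_zero (ne_of_gt hc) hy
  have hsmul : HasFDerivAt (fun z : Fin n → ℝ => c • z)
      (c • ContinuousLinearMap.id ℝ (Fin n → ℝ)) y :=
    (ContinuousLinearMap.id ℝ (Fin n → ℝ) |>.hasFDerivAt).const_smul c
  have h1 : HasFDerivAt (fun z => g (c • z))
      ((fderiv ℝ g (c • y)).comp (c • ContinuousLinearMap.id ℝ (Fin n → ℝ))) y :=
    (hg _ hcy).hasFDerivAt.comp y hsmul
  have h2 : HasFDerivAt (fun z => c ^ (d+1) * g z) (c ^ (d+1) • fderiv ℝ g y) y :=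
    (hg y hy).hasFDerivAt.const_mul _
  have heq : (fun z => g (c • z)) =ᶠ[𝓝 y] (fun z => c ^ (d+1) * g z) := by
    have hmem : {z : Fin n → ℝ | z ≠ 0} ∈ 𝓝 y := isOpen_ne.mem_nhds hy
    exact eventually_of_mem hmem fun z hz => hh c hc z hz
  have h3 : HasFDerivAt (fun z => g (c • z)) (c ^ (d+1) • fderiv ℝ g y) y :=
    h2.congr_of_eventuallyEq heq
  have h4 := h1.unique h3
  have h5 := congrArg (fun L => L (Pi.single m 1)) h4
  simp only [ContinuousLinearMap.coe_comp', Function.comp_apply,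
    ContinuousLinearMap.smul_apply, ContinuousLinearMap.coe_id', id_eq,
    smul_eq_mul] at h5
  -- h5 : fderiv ℝ g (c • y) (c • Pi.single m 1) = c ^ (d+1) * fderiv ℝ g y (Pi.single m 1)
  have h6 : c * pd m g (c • y) = c ^ (d+1) * pd m g y := by
    unfold pd
    rw [map_smul, smul_eq_mul] at h5
    exact h5
  have hc0 : c ≠ 0 := ne_of_gt hc
  have h7 : c * pd m g (c • y) = c * (c ^ d * pd m g y) := by rw [h6]; ring
  exact mul_left_cancel₀ hc0 h7

lemma const_of_pd_zero {g : (Fin n → ℝ) → ℝ} {s : Set (Fin n → ℝ)}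
    (hs : IsOpen s) (hsc : IsPreconnected s)
    (hg : ∀ y ∈ s, DifferentiableAt ℝ g y)
    (h0 : ∀ y ∈ s, ∀ m, pd m g y = 0)
    {a b : Fin n → ℝ} (ha : a ∈ s) (hb : b ∈ s) : g a = g b := by
  have hfz : ∀ y ∈ s, fderiv ℝ g y = 0 := by
    intro y hy
    ext v
    rw [ContinuousLinearMap.zero_apply, fderiv_apply_eq_sum]
    exact Finset.sum_eq_zero fun m _ => by rw [h0 y hy m, mul_zero]
  -- local constancy on balls
  have hball : ∀ z ∈ s, ∀ ε > 0, Metric.ball z ε ⊆ s →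
      ∀ w ∈ Metric.ball z ε, g w = g z := by
    intro z hz ε hε hball w hw
    have hzb : z ∈ Metric.ball z ε := Metric.mem_ball_self hε
    refine (convex_ball z ε).is_const_of_fderivWithin_eq_zero
      (fun u hu => (hg u (hball hu)).differentiableWithinAt) ?_ hw hzb
    intro u hu
    rw [fderivWithin_of_isOpen Metric.isOpen_ball hu]
    exact hfz u (hball hu)
  set u : Set (Fin n → ℝ) := {z ∈ s | g z = g a} with hu_def
  have huo : IsOpen u := by
    rw [Metric.isOpen_iff]
    rintro z ⟨hzs, hzg⟩
    obtain ⟨ε, hε, hball'⟩ := Metric.isOpen_iff.1 hs z hzs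
    exact ⟨ε, hε, fun w hw => ⟨hball' hw, by rw [hball z hzs ε hε hball' w hw, hzg]⟩⟩
  have hsub : s ⊆ u := by
    refine hsc.subset_of_closure_inter_subset huo ⟨a, ha, ha, rfl⟩ ?_
    rintro z ⟨hzc, hzs⟩
    obtain ⟨ε, hε, hball'⟩ := Metric.isOpen_iff.1 hs z hzs
    obtain ⟨w, hw1, hw2⟩ := Metric.mem_closure_iff.1 hzc ε hε
    have hwball : w ∈ Metric.ball z ε := by
      rw [Metric.mem_ball, dist_comm]; exact hw2
    refine ⟨hzs, ?_⟩
    rw [← (hball z hzs ε hε hball' w hwball), hw1.2]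
  exact ((hsub ha).2).trans ((hsub hb).2).symm
/-! ### Admissible functions on `U × (ℝⁿ \ {0})` -/

def Adm (U : Set (Fin n → ℝ)) (f : (Fin n → ℝ) → (Fin n → ℝ) → ℝ) : Prop :=
  ∀ x : Fin n → ℝ, x ∈ U → ∀ y : Fin n → ℝ, y ≠ 0 →
    ContDiffAt ℝ ∞ (fun q : (Fin n → ℝ) × (Fin n → ℝ) => f q.1 q.2) (x, y)

variable {U : Set (Fin n → ℝ)} {f : (Fin n → ℝ) → (Fin n → ℝ) → ℝ}

lemma omega_mem_nhds (hU : IsOpen U) {x y : Fin n → ℝ} (hx : x ∈ U) (hy : y ≠ 0) :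
    (U ×ˢ {y : Fin n → ℝ | y ≠ 0}) ∈ 𝓝 ((x, y) : (Fin n → ℝ) × (Fin n → ℝ)) :=
  (hU.prod isOpen_ne).mem_nhds ⟨hx, hy⟩

lemma Adm.sliceY (hf : Adm U f) {x y : Fin n → ℝ} (hx : x ∈ U) (hy : y ≠ 0) :
    ContDiffAt ℝ ∞ (f x) y :=
  (hf x hx y hy).comp y ((contDiffAt_const (c := x)).prodMk contDiffAt_id)

lemma Adm.sliceX (hf : Adm U f) {x y : Fin n → ℝ} (hx : x ∈ U) (hy : y ≠ 0) :
    ContDiffAt ℝ ∞ (fun x' => f x' y) x :=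
  (hf x hx y hy).comp x (contDiffAt_id.prodMk (contDiffAt_const (c := y)))

lemma Adm.pdx_eq (hf : Adm U f) {x y : Fin n → ℝ} (hx : x ∈ U) (hy : y ≠ 0) (m : Fin n) :
    pdx m f x y = fderiv ℝ (fun q : (Fin n → ℝ) × (Fin n → ℝ) => f q.1 q.2) (x, y)
      (Pi.single m 1, 0) := by
  have hd : DifferentiableAt ℝ (fun q : (Fin n → ℝ) × (Fin n → ℝ) => f q.1 q.2) (x, y) :=
    (hf x hx y hy).differentiableAt one_le_inf
  have h1 : HasFDerivAt (fun x' => f x' y)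
      ((fderiv ℝ (fun q : (Fin n → ℝ) × (Fin n → ℝ) => f q.1 q.2) (x, y)).comp
        (ContinuousLinearMap.inl ℝ (Fin n → ℝ) (Fin n → ℝ))) x :=
    HasFDerivAt.comp (g := fun q : (Fin n → ℝ) × (Fin n → ℝ) => f q.1 q.2) x hd.hasFDerivAt
      (hasFDerivAt_prodMk_left (𝕜 := ℝ) x y)
  show fderiv ℝ (fun x' => f x' y) x (Pi.single m 1) = _
  rw [h1.fderiv]
  rfl

lemma Adm.pdy_eq (hf : Adm U f) {x y : Fin n → ℝ} (hx : x ∈ U) (hy : y ≠ 0) (m : Fin n) :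
    pdy m f x y = fderiv ℝ (fun q : (Fin n → ℝ) × (Fin n → ℝ) => f q.1 q.2) (x, y)
      (0, Pi.single m 1) := by
  have hd : DifferentiableAt ℝ (fun q : (Fin n → ℝ) × (Fin n → ℝ) => f q.1 q.2) (x, y) :=
    (hf x hx y hy).differentiableAt one_le_inf
  have h1 : HasFDerivAt (f x)
      ((fderiv ℝ (fun q : (Fin n → ℝ) × (Fin n → ℝ) => f q.1 q.2) (x, y)).comp
        (ContinuousLinearMap.inr ℝ (Fin n → ℝ) (Fin n → ℝ))) y :=
    hd.hasFDerivAt.comp y (hasFDerivAt_prodMk_right x y)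
  show fderiv ℝ (f x) y (Pi.single m 1) = _
  rw [h1.fderiv]
  rfl

lemma Adm.pdxAdm (hf : Adm U f) (hU : IsOpen U) (m : Fin n) : Adm U (pdx m f) := by
  intro x hx y hy
  refine (((hf x hx y hy).fderiv_right inf_add_one_le).clm_apply
    (contDiffAt_const (c := ((Pi.single m 1 : Fin n → ℝ), (0 : Fin n → ℝ))))).congr_of_eventuallyEq ?_
  refine eventually_of_mem (omega_mem_nhds hU hx hy) fun q hq => ?_
  exact hf.pdx_eq hq.1 hq.2 m

lemma Adm.pdyAdm (hf : Adm U f) (hU : IsOpen U) (m : Fin n) : Adm U (pdy m f) := by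
  intro x hx y hy
  refine (((hf x hx y hy).fderiv_right inf_add_one_le).clm_apply
    (contDiffAt_const (c := ((0 : Fin n → ℝ), (Pi.single m 1 : Fin n → ℝ))))).congr_of_eventuallyEq ?_
  refine eventually_of_mem (omega_mem_nhds hU hx hy) fun q hq => ?_
  exact hf.pdy_eq hq.1 hq.2 m

/-! ### Smoothness of matrix determinant and inverse entries -/

lemma contDiffAt_det {α : Type*} [NormedAddCommGroup α] [NormedSpace ℝ α]
    {M : α → Matrix (Fin n) (Fin n) ℝ} {p : α}
    (h : ∀ i j, ContDiffAt ℝ ∞ (fun q => M q i j) p) :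
    ContDiffAt ℝ ∞ (fun q => (M q).det) p := by
  have : (fun q => (M q).det)
      = fun q => ∑ σ : Equiv.Perm (Fin n), ((Equiv.Perm.sign σ : ℤ) : ℝ)
          * ∏ i, M q (σ i) i := by
    funext q
    rw [Matrix.det_apply]
    refine Finset.sum_congr rfl fun σ _ => ?_
    rw [Units.smul_def, zsmul_eq_mul]
  rw [this]
  exact ContDiffAt.sum fun σ _ =>
    (contDiffAt_const).mul (contDiffAt_prod fun i _ => h (σ i) i)

lemma contDiffAt_adjugate {α : Type*} [NormedAddCommGroup α] [NormedSpace ℝ α]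
    {M : α → Matrix (Fin n) (Fin n) ℝ} {p : α}
    (h : ∀ i j, ContDiffAt ℝ ∞ (fun q => M q i j) p) (i j : Fin n) :
    ContDiffAt ℝ ∞ (fun q => (M q).adjugate i j) p := by
  simp_rw [Matrix.adjugate_apply]
  apply contDiffAt_det
  intro a b
  simp_rw [Matrix.updateRow_apply]
  by_cases haj : a = j
  · simp only [haj, if_true, if_pos rfl]
    exact contDiffAt_const
  · simp only [haj, if_false]
    exact h a b

lemma contDiffAt_inv_entry {α : Type*} [NormedAddCommGroup α] [NormedSpace ℝ α]
    {M : α → Matrix (Fin n) (Fin n) ℝ} {p : α}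
    (h : ∀ i j, ContDiffAt ℝ ∞ (fun q => M q i j) p)
    (hdet : (M p).det ≠ 0) (i j : Fin n) :
    ContDiffAt ℝ ∞ (fun q => (M q)⁻¹ i j) p := by
  have hrw : ∀ q, (M q)⁻¹ i j = ((M q).det)⁻¹ * (M q).adjugate i j := by
    intro q
    rw [Matrix.inv_def, Matrix.smul_apply, Ring.inverse_eq_inv', smul_eq_mul]
  simp_rw [hrw]
  exact ((contDiffAt_det h).inv hdet).mul (contDiffAt_adjugate h i j)
/-! ### Application to a Finsler metric -/

section Finsler

variable {F : (Fin n → ℝ) → (Fin n → ℝ) → ℝ} {U : Set (Fin n → ℝ)}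
variable (hF : IsFinslerOn n U F)
include hF

lemma admFsq : Adm U (Fsq F) := by
  intro x hx y hy
  exact ((hF.smooth.of_le (by simp)).contDiffAt (omega_mem_nhds hF.isOpen hx hy)).pow 2

lemma admFund (i j : Fin n) : Adm U (fundTensor F i j) := fun x hx y hy =>
  contDiffAt_const.mul ((((admFsq hF).pdyAdm hF.isOpen j).pdyAdm hF.isOpen i) x hx y hy)

lemma det_g_ne_zero {x y : Fin n → ℝ} (hx : x ∈ U) (hy : y ≠ 0) :
    (gMatrix F x y).det ≠ 0 := by
  intro h0
  obtain ⟨v, hv, hmv⟩ := (Matrix.exists_mulVec_eq_zero_iff).2 h0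
  have hpos := hF.posdef x hx y hy v hv
  have hzero : ∑ i, ∑ j, fundTensor F i j x y * v i * v j = 0 := by
    have hrow : ∀ i, ∑ j, fundTensor F i j x y * v i * v j
        = v i * ((gMatrix F x y).mulVec v i) := by
      intro i
      simp only [Matrix.mulVec, dotProduct, Finset.mul_sum]
      exact Finset.sum_congr rfl fun j _ => by
        show fundTensor F i j x y * v i * v j = v i * (gMatrix F x y i j * v j)
        show fundTensor F i j x y * v i * v j = v i * (fundTensor F i j x y * v j)
        ring
    simp_rw [hrow, hmv]
    simp
  linarith

lemma admInvEntry (i l : Fin n) {x y : Fin n → ℝ} (hx : x ∈ U) (hy : y ≠ 0) :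
    ContDiffAt ℝ ∞ (fun q : (Fin n → ℝ) × (Fin n → ℝ) => (gMatrix F q.1 q.2)⁻¹ i l)
      ((x, y) : (Fin n → ℝ) × (Fin n → ℝ)) := by
  refine contDiffAt_inv_entry (M := fun q : (Fin n → ℝ) × (Fin n → ℝ) => gMatrix F q.1 q.2)
    (p := ((x, y) : (Fin n → ℝ) × (Fin n → ℝ))) (fun a b => ?_) (det_g_ne_zero hF hx hy) i l
  exact (admFund hF a b) x hx y hy

lemma admSpray (i : Fin n) : Adm U (spray F i) := by
  intro x hx y hy
  apply ContDiffAt.mul contDiffAt_const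
  apply ContDiffAt.sum
  intro l _
  apply ContDiffAt.mul (admInvEntry hF i l hx hy)
  apply ContDiffAt.sub
  · apply ContDiffAt.sum
    intro m _
    apply ContDiffAt.mul
    · exact (((ContinuousLinearMap.proj m).comp
        (ContinuousLinearMap.snd ℝ (Fin n → ℝ) (Fin n → ℝ))).contDiff).contDiffAt
    · exact (((admFsq hF).pdxAdm hF.isOpen m).pdyAdm hF.isOpen l) x hx y hy
  · exact ((admFsq hF).pdxAdm hF.isOpen l) x hx y hy

lemma spraySliceSmooth (i : Fin n) {x y : Fin n → ℝ} (hx : x ∈ U) (hy : y ≠ 0) :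
    ContDiffAt ℝ ∞ (spray F i x) y :=
  (admSpray hF i).sliceY hx hy

/-! ### Homogeneity -/

lemma Fsq_homog {x : Fin n → ℝ} (hx : x ∈ U) :
    ∀ c : ℝ, 0 < c → ∀ y : Fin n → ℝ, Fsq F x (c • y) = c ^ 2 * Fsq F x y := by
  intro c hc y
  show (F x (c • y)) ^ 2 = c ^ 2 * (F x y) ^ 2
  rw [hF.homog x hx y c hc]
  ring

lemma pdyFsq_homog {x : Fin n → ℝ} (hx : x ∈ U) (j : Fin n) :
    ∀ c : ℝ, 0 < c → ∀ y : Fin n → ℝ, y ≠ 0 →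
      pd j (Fsq F x) (c • y) = c ^ 1 * pd j (Fsq F x) y := by
  intro c hc y hy
  exact pd_homog 1 (fun y' hy' => ((admFsq hF).sliceY hx hy').differentiableAt one_le_inf)
    (fun c hc y' _ => Fsq_homog hF hx c hc y') j c hc y hy

lemma fund_homog (i j : Fin n) {x : Fin n → ℝ} (hx : x ∈ U) :
    ∀ c : ℝ, 0 < c → ∀ y : Fin n → ℝ, y ≠ 0 →
      fundTensor F i j x (c • y) = fundTensor F i j x y := by
  intro c hc y hy
  show (1/2) * pd i (pd j (Fsq F x)) (c • y) = (1/2) * pd i (pd j (Fsq F x)) y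
  have := pd_homog 0 (fun y' hy' =>
      (contDiffAt_pd ((admFsq hF).sliceY hx hy') j).differentiableAt one_le_inf)
    (fun c hc y' hy' => by
      rw [pdyFsq_homog hF hx j c hc y' hy']
      try norm_num) i c hc y hy
  rw [this]
  norm_num

lemma gMatrix_homog {x : Fin n → ℝ} (hx : x ∈ U) {c : ℝ} (hc : 0 < c)
    {y : Fin n → ℝ} (hy : y ≠ 0) : gMatrix F x (c • y) = gMatrix F x y := by
  ext i j
  exact fund_homog hF i j hx c hc y hy

lemma pdxFsq_homog {x : Fin n → ℝ} (hx : x ∈ U) (l : Fin n) {c : ℝ} (hc : 0 < c)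
    {y : Fin n → ℝ} (hy : y ≠ 0) :
    pdx l (Fsq F) x (c • y) = c ^ 2 * pdx l (Fsq F) x y := by
  have hdiff : DifferentiableAt ℝ (fun x' => Fsq F x' y) x :=
    ((admFsq hF).sliceX hx hy).differentiableAt one_le_inf
  have hEq : (fun x' => Fsq F x' (c • y)) =ᶠ[𝓝 x] (fun x' => c ^ 2 * Fsq F x' y) :=
    eventually_of_mem (hF.isOpen.mem_nhds hx) fun x' hx' => Fsq_homog hF hx' c hc y
  show fderiv ℝ (fun x' => Fsq F x' (c • y)) x (Pi.single l 1) = _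
  rw [hEq.fderiv_eq, fderiv_const_mul hdiff]
  rfl

lemma pdypdxFsq_homog {x : Fin n → ℝ} (hx : x ∈ U) (l m : Fin n) {c : ℝ} (hc : 0 < c)
    {y : Fin n → ℝ} (hy : y ≠ 0) :
    pdy l (pdx m (Fsq F)) x (c • y) = c ^ 1 * pdy l (pdx m (Fsq F)) x y := by
  exact pd_homog 1 (fun y' hy' =>
      (((admFsq hF).pdxAdm hF.isOpen m).sliceY hx hy').differentiableAt one_le_inf)
    (fun c hc y' hy' => pdxFsq_homog hF hx m hc hy') l c hc y hy

lemma spray_homog (i : Fin n) {x : Fin n → ℝ} (hx : x ∈ U) {c : ℝ} (hc : 0 < c)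
    {y : Fin n → ℝ} (hy : y ≠ 0) :
    spray F i x (c • y) = c ^ 2 * spray F i x y := by
  show (1 / 4) * ∑ l, (gMatrix F x (c • y))⁻¹ i l *
      ((∑ m, (c • y) m * pdy l (pdx m (Fsq F)) x (c • y)) - pdx l (Fsq F) x (c • y))
    = c ^ 2 * ((1 / 4) * ∑ l, (gMatrix F x y)⁻¹ i l *
      ((∑ m, y m * pdy l (pdx m (Fsq F)) x y) - pdx l (Fsq F) x y))
  rw [gMatrix_homog hF hx hc hy]
  have hterm : ∀ l, (gMatrix F x y)⁻¹ i l *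
      ((∑ m, (c • y) m * pdy l (pdx m (Fsq F)) x (c • y)) - pdx l (Fsq F) x (c • y))
      = c ^ 2 * ((gMatrix F x y)⁻¹ i l *
        ((∑ m, y m * pdy l (pdx m (Fsq F)) x y) - pdx l (Fsq F) x y)) := by
    intro l
    have hsum : (∑ m, (c • y) m * pdy l (pdx m (Fsq F)) x (c • y))
        = c ^ 2 * ∑ m, y m * pdy l (pdx m (Fsq F)) x y := by
      rw [Finset.mul_sum]
      refine Finset.sum_congr rfl fun m _ => ?_
      rw [Pi.smul_apply, smul_eq_mul, pdypdxFsq_homog hF hx l m hc hy]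
      ring
    rw [hsum, pdxFsq_homog hF hx l hc hy]
    ring
  simp_rw [hterm, ← Finset.mul_sum]
  ring

end Finsler
/-! ### The reduced spray `T^i` and the divergence identity -/

def Tfun (F : (Fin n → ℝ) → (Fin n → ℝ) → ℝ) (x : Fin n → ℝ) (i : Fin n) :
    (Fin n → ℝ) → ℝ :=
  fun y => spray F i x y - (1 / ((n : ℝ) + 1)) * (∑ m, pd m (spray F m x) y) * y i

lemma douglasTensor_eq (F : (Fin n → ℝ) → (Fin n → ℝ) → ℝ) (x : Fin n → ℝ)
    (j i k l : Fin n) (y : Fin n → ℝ) :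
    douglasTensor F j i k l x y = pd j (pd k (pd l (Tfun F x i))) y := rfl

section Finsler2

variable {F : (Fin n → ℝ) → (Fin n → ℝ) → ℝ} {U : Set (Fin n → ℝ)}
variable (hF : IsFinslerOn n U F)
include hF

lemma Tfun_smooth (i : Fin n) {x y : Fin n → ℝ} (hx : x ∈ U) (hy : y ≠ 0) :
    ContDiffAt ℝ ∞ (Tfun F x i) y := by
  unfold Tfun
  refine (spraySliceSmooth hF i hx hy).sub ?_
  refine ContDiffAt.mul ?_ ?_
  · exact contDiffAt_const.mul (ContDiffAt.sum fun m _ =>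
      contDiffAt_pd (spraySliceSmooth hF m hx hy) m)
  · exact ((ContinuousLinearMap.proj i :
      (Fin n → ℝ) →L[ℝ] ℝ).contDiff).contDiffAt

lemma pdSpray_homog (a m : Fin n) {x : Fin n → ℝ} (hx : x ∈ U) :
    ∀ c : ℝ, 0 < c → ∀ y : Fin n → ℝ, y ≠ 0 →
      pd m (spray F a x) (c • y) = c ^ 1 * pd m (spray F a x) y :=
  pd_homog 1 (fun z hz => (spraySliceSmooth hF a hx hz).differentiableAt one_le_inf)
    (fun c hc z hz => spray_homog hF a hx hc hz) m

lemma Tfun_homog (a : Fin n) {x : Fin n → ℝ} (hx : x ∈ U) :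
    ∀ c : ℝ, 0 < c → ∀ y : Fin n → ℝ, y ≠ 0 →
      Tfun F x a (c • y) = c ^ 2 * Tfun F x a y := by
  intro c hc y hy
  unfold Tfun
  rw [spray_homog hF a hx hc hy]
  have hsum : (∑ m, pd m (spray F m x) (c • y)) = c * ∑ m, pd m (spray F m x) y := by
    rw [Finset.mul_sum]
    refine Finset.sum_congr rfl fun m _ => ?_
    rw [pdSpray_homog hF m m hx c hc y hy]
    ring
  rw [hsum, Pi.smul_apply, smul_eq_mul]
  ring

lemma divergence (a : Fin n) {x y : Fin n → ℝ} (hx : x ∈ U) (hy : y ≠ 0) :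
    ∑ b, pd b (fun z => spray F a x z * z b - spray F b x z * z a) y
      = ((n : ℝ) + 1) * Tfun F x a y := by
  have hdiff : ∀ b : Fin n, DifferentiableAt ℝ (spray F b x) y := fun b =>
    (spraySliceSmooth hF b hx hy).differentiableAt one_le_inf
  have heuler : ∑ m, y m * pd m (spray F a x) y = 2 * spray F a x y := by
    have h := euler 2 (hdiff a) (fun c hc => spray_homog hF a hx hc hy)
    rw [show ((2:ℕ):ℝ) = 2 by norm_num] at h
    exact h
  have hterm : ∀ b : Fin n, pd b (fun z => spray F a x z * z b - spray F b x z * z a) y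
      = (pd b (spray F a x) y * y b + spray F a x y)
        - (pd b (spray F b x) y * y a + spray F b x y * (if a = b then 1 else 0)) := by
    intro b
    rw [pd_sub ((hdiff a).fun_mul (diff_eval b).differentiableAt)
        ((hdiff b).fun_mul (diff_eval a).differentiableAt) b,
      pd_mul (hdiff a) (diff_eval b).differentiableAt b,
      pd_mul (hdiff b) (diff_eval a).differentiableAt b, pd_eval, pd_eval]
    simp [Pi.single_apply]
  rw [Finset.sum_congr rfl fun b _ => hterm b, Finset.sum_sub_distrib,
    Finset.sum_add_distrib, Finset.sum_add_distrib]
  have e1 : ∑ b, pd b (spray F a x) y * y b = 2 * spray F a x y := by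
    rw [← heuler]
    exact Finset.sum_congr rfl fun b _ => mul_comm _ _
  have e2 : ∑ _b : Fin n, spray F a x y = (n : ℝ) * spray F a x y := by
    simp [Finset.sum_const, Finset.card_univ, nsmul_eq_mul]
  have e3 : ∑ b, pd b (spray F b x) y * y a = (∑ b, pd b (spray F b x) y) * y a :=
    (Finset.sum_mul _ _ _).symm
  have e4 : ∑ b, spray F b x y * (if a = b then 1 else 0) = spray F a x y := by
    simp
  rw [e1, e2, e3, e4]
  unfold Tfun
  have hne : ((n : ℝ) + 1) ≠ 0 := by positivity
  field_simp
  ring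

end Finsler2
lemma S2_sum_swap (κ : ℝ) (D : Fin n → Fin n → Fin n → ℝ) (z : Fin n → ℝ) :
    κ * ∑ b, S2 (D b) z = S2 (fun q r => κ * ∑ b, D b q r) z := by
  simp only [S2, Finset.mul_sum, Finset.sum_mul]
  rw [Finset.sum_comm]
  refine Finset.sum_congr rfl fun q _ => ?_
  rw [Finset.sum_comm]
  refine Finset.sum_congr rfl fun r _ => ?_
  refine Finset.sum_congr rfl fun b _ => by ring

end DouglasAux
end DouglasAux

open DouglasAux
open scoped ContDiff

/-- `F` is a Douglas metric iff for every `x ∈ U` and all indices `i, j`,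
`y ↦ G^i(x,y) y^j − G^j(x,y) y^i` coincides on `ℝⁿ ∖ {0}` with a homogeneous
polynomial of degree 3 in `y`. -/
theorem douglas_iff_Gdiff_cubic {n : ℕ} {U : Set (Fin n → ℝ)}
    {F : (Fin n → ℝ) → (Fin n → ℝ) → ℝ} (hF : IsFinslerOn n U F) :
    IsDouglas U F ↔
      ∀ x ∈ U, ∀ i j : Fin n, ∃ C : Fin n → Fin n → Fin n → ℝ,
        ∀ y : Fin n → ℝ, y ≠ 0 →
          spray F i x y * y j - spray F j x y * y i
            = ∑ p, ∑ q, ∑ r, C p q r * y p * y q * y r := by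
  classical
  constructor
  · -- Douglas ⟹ cubic
    intro hD x hx i j
    by_cases h2 : n < 2
    · have hij : i = j := Fin.ext (by have := i.isLt; have := j.isLt; omega)
      subst hij
      exact ⟨fun _ _ _ => 0, fun y _ => by simp⟩
    push_neg at h2
    have hSopen : IsOpen {y : Fin n → ℝ | y ≠ 0} := isOpen_ne
    have hconn : IsPreconnected {y : Fin n → ℝ | y ≠ 0} := by
      have hrank : 1 < Module.rank ℝ (Fin n → ℝ) := by
        rw [rank_fun']
        simp only [Fintype.card_fin]
        have h1 : (1 : ℕ) < n := by omega
        exact_mod_cast h1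
      exact (isConnected_compl_singleton_of_one_lt_rank hrank
        (0 : Fin n → ℝ)).isPreconnected
    have hy₀ : (fun _ => (1:ℝ) : Fin n → ℝ) ≠ 0 := by
      intro h
      have := congrFun h ⟨0, by omega⟩
      norm_num at this
    set y₀ : Fin n → ℝ := fun _ => 1 with hy₀def
    have hTsm : ∀ (a : Fin n) (z : Fin n → ℝ), z ≠ 0 → ContDiffAt ℝ ∞ (Tfun F x a) z :=
      fun a z hz => Tfun_smooth hF a hx hz
    have hDz : ∀ (a k l : Fin n) (z : Fin n → ℝ), z ≠ 0 → ∀ b : Fin n,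
        pd b (pd k (pd l (Tfun F x a))) z = 0 := by
      intro a k l z hz b
      rw [← douglasTensor_eq]
      exact hD x hx z hz b a k l
    have hconst : ∀ (a k l : Fin n) (z : Fin n → ℝ), z ≠ 0 →
        pd k (pd l (Tfun F x a)) z = pd k (pd l (Tfun F x a)) y₀ := by
      intro a k l z hz
      exact const_of_pd_zero hSopen hconn
        (fun w hw => (contDiffAt_pd (contDiffAt_pd (hTsm a w hw) l) k).differentiableAt
          one_le_inf)
        (fun w hw b => hDz a k l w hw b) hz hy₀
    have hE1 : ∀ (a l : Fin n) (z : Fin n → ℝ), z ≠ 0 →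
        pd l (Tfun F x a) z = ∑ k, z k * pd k (pd l (Tfun F x a)) y₀ := by
      intro a l z hz
      have hhom : ∀ c : ℝ, 0 < c → ∀ w : Fin n → ℝ, w ≠ 0 →
          pd l (Tfun F x a) (c • w) = c ^ 1 * pd l (Tfun F x a) w :=
        pd_homog 1 (fun w hw => (hTsm a w hw).differentiableAt one_le_inf)
          (fun c hc w hw => Tfun_homog hF a hx c hc w hw) l
      have he := euler 1 ((contDiffAt_pd (hTsm a z hz) l).differentiableAt one_le_inf)
        (fun c hc => hhom c hc z hz)
      rw [Nat.cast_one, one_mul] at he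
      rw [← he]
      exact Finset.sum_congr rfl fun k _ => by rw [hconst a k l z hz]
    have hE2 : ∀ (a : Fin n) (z : Fin n → ℝ), z ≠ 0 →
        Tfun F x a z = (1/2) * ∑ l, z l * ∑ k, z k * pd k (pd l (Tfun F x a)) y₀ := by
      intro a z hz
      have he := euler 2 ((hTsm a z hz).differentiableAt one_le_inf)
        (fun c hc => Tfun_homog hF a hx c hc z hz)
      rw [show ((2:ℕ):ℝ) = 2 by norm_num] at he
      have hsum : ∑ l, z l * pd l (Tfun F x a) z
          = ∑ l, z l * ∑ k, z k * pd k (pd l (Tfun F x a)) y₀ :=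
        Finset.sum_congr rfl fun l _ => by rw [hE1 a l z hz]
      rw [hsum] at he
      linarith
    refine ⟨fun p q r => (if r = j then (1/2) * pd q (pd p (Tfun F x i)) y₀ else 0)
      - (if r = i then (1/2) * pd q (pd p (Tfun F x j)) y₀ else 0), fun y hy => ?_⟩
    have hsprayT : ∀ a : Fin n, spray F a x y
        = Tfun F x a y + (1/((n:ℝ)+1)) * (∑ m, pd m (spray F m x) y) * y a := by
      intro a; unfold Tfun; ring
    have expand1 : ∀ (B : Fin n → Fin n → ℝ) (w : ℝ),
        ((1/2) * ∑ l, y l * ∑ k, y k * B k l) * w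
          = ∑ p, ∑ q, (1/2) * B q p * y p * y q * w := by
      intro B w
      simp only [Finset.sum_mul, Finset.mul_sum]
      refine Finset.sum_congr rfl fun p _ => Finset.sum_congr rfl fun q _ => by ring
    have hgoal1 : spray F i x y * y j - spray F j x y * y i
        = ((1/2) * ∑ l, y l * ∑ k, y k * pd k (pd l (Tfun F x i)) y₀) * y j
          - ((1/2) * ∑ l, y l * ∑ k, y k * pd k (pd l (Tfun F x j)) y₀) * y i := by
      rw [hsprayT i, hsprayT j, hE2 i y hy, hE2 j y hy]
      ring
    rw [hgoal1, expand1 (fun k l => pd k (pd l (Tfun F x i)) y₀) (y j),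
      expand1 (fun k l => pd k (pd l (Tfun F x j)) y₀) (y i),
      ← Finset.sum_sub_distrib]
    refine Finset.sum_congr rfl fun p _ => ?_
    rw [← Finset.sum_sub_distrib]
    refine Finset.sum_congr rfl fun q _ => ?_
    simp only [sub_mul, ite_mul, zero_mul, Finset.sum_sub_distrib, Finset.sum_ite_eq',
      Finset.mem_univ, if_true]
  · -- cubic ⟹ Douglas
    intro hC x hx y hy j i k l
    rw [douglasTensor_eq]
    have hCx := fun a b => hC x hx a b
    choose C hP using hCx
    have hdiv : ∀ (a : Fin n) (z : Fin n → ℝ), z ≠ 0 →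
        Tfun F x a z = S2 (fun q r => (1/((n:ℝ)+1)) * ∑ b,
          (C a b b q r + C a b q b r + C a b q r b)) z := by
      intro a z hz
      have h1 : ∀ b : Fin n, pd b (fun w => spray F a x w * w b - spray F b x w * w a) z
          = S2 (fun q r => C a b b q r + C a b q b r + C a b q r b) z := by
        intro b
        have heq : Set.EqOn (fun w => spray F a x w * w b - spray F b x w * w a)
            (S3 (C a b)) {w : Fin n → ℝ | w ≠ 0} := fun w hw => hP a b w hw
        rw [pd_eqOn isOpen_ne heq b hz, pd_S3]
      have h2 := divergence hF a hx hz
      rw [Finset.sum_congr rfl fun b _ => h1 b] at h2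
      have hne : ((n:ℝ)+1) ≠ 0 := by positivity
      have h3 : Tfun F x a z = (1/((n:ℝ)+1)) * ∑ b,
          S2 (fun q r => C a b b q r + C a b q b r + C a b q r b) z := by
        rw [h2]
        field_simp
      rw [h3, S2_sum_swap]
    have hTeqOn : Set.EqOn (Tfun F x i) (S2 (fun q r => (1/((n:ℝ)+1)) * ∑ b,
        (C i b b q r + C i b q b r + C i b q r b))) {w : Fin n → ℝ | w ≠ 0} :=
      fun w hw => hdiv i w hw
    have e1 : Set.EqOn (pd l (Tfun F x i))
        (S1 (fun q => (fun q' r' => (1/((n:ℝ)+1)) * ∑ b,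
          (C i b b q' r' + C i b q' b r' + C i b q' r' b)) l q
          + (fun q' r' => (1/((n:ℝ)+1)) * ∑ b,
          (C i b b q' r' + C i b q' b r' + C i b q' r' b)) q l))
        {w : Fin n → ℝ | w ≠ 0} := by
      intro w hw
      rw [pd_eqOn isOpen_ne hTeqOn l hw, pd_S2]
    have e2 : Set.EqOn (pd k (pd l (Tfun F x i)))
        (fun _ => (fun q => (fun q' r' => (1/((n:ℝ)+1)) * ∑ b,
          (C i b b q' r' + C i b q' b r' + C i b q' r' b)) l q
          + (fun q' r' => (1/((n:ℝ)+1)) * ∑ b,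
          (C i b b q' r' + C i b q' b r' + C i b q' r' b)) q l) k)
        {w : Fin n → ℝ | w ≠ 0} := by
      intro w hw
      rw [pd_eqOn isOpen_ne e1 k hw, pd_S1]
    rw [pd_eqOn isOpen_ne e2 j hy, pd_const]
end

section
/- Let U ⊆ ℝ^n be open and let G^i and Ḡ^i (i = 1,…,n) be smooth functions on U × (ℝ^n ∖ {0}), each positively 2-homogeneous in y, related by a projective change Ḡ^i(x,y) = G^i(x,y) + P(x,y) y^i, where P is smooth on U × (ℝ^n ∖ {0}) and positively 1-homogeneous in y. Then the Douglas tensors of the two sprays coincide: ∂³/∂y^j∂y^k∂y^l [ Ḡ^i − (1/(n+1)) (∂Ḡ^m/∂y^m) y^i ] = ∂³/∂y^j∂y^k∂y^l [ G^i − (1/(n+1)) (∂G^m/∂y^m) y^i ] for all indices i, j, k, l and all (x,y) with y ≠ 0. -/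
open Set

lemma pdy_congr_aux {n : ℕ} (f g : (Fin n → ℝ) → (Fin n → ℝ) → ℝ) (x : Fin n → ℝ)
    (h : ∀ y : Fin n → ℝ, y ≠ 0 → f x y = g x y) (m : Fin n) :
    ∀ y : Fin n → ℝ, y ≠ 0 → pdy m f x y = pdy m g x y := by
  intro y hy
  have heq : f x =ᶠ[nhds y] g x :=
    Filter.eventuallyEq_of_mem
      ((isOpen_ne : IsOpen {w : Fin n → ℝ | w ≠ 0}).mem_nhds hy)
      (fun z hz => h z hz)
  simp only [pdy]
  rw [heq.fderiv_eq]

lemma euler_one_homog {n : ℕ} (Q : (Fin n → ℝ) → ℝ) (z : Fin n → ℝ)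
    (hd : DifferentiableAt ℝ Q z)
    (hhom : ∀ c : ℝ, 0 < c → Q (c • z) = c * Q z) :
    fderiv ℝ Q z z = Q z := by
  have h2 : HasDerivAt (fun c : ℝ => c • z) z 1 := by
    simpa using (hasDerivAt_id (1:ℝ)).smul_const z
  have h1 : HasDerivAt (fun c : ℝ => Q (c • z)) (fderiv ℝ Q z z) 1 := by
    have hd' : HasFDerivAt Q (fderiv ℝ Q z) ((fun c : ℝ => c • z) 1) := by
      simpa using hd.hasFDerivAt
    exact (hd'.comp_hasDerivAt 1 h2)
  have h3 : (fun c : ℝ => c * Q z) =ᶠ[nhds 1] (fun c : ℝ => Q (c • z)) := by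
    filter_upwards [eventually_gt_nhds (by norm_num : (0:ℝ) < 1)] with c hc
    exact (hhom c hc).symm
  have h4 : HasDerivAt (fun c : ℝ => c * Q z) (fderiv ℝ Q z z) 1 :=
    h1.congr_of_eventuallyEq h3
  have h5 : HasDerivAt (fun c : ℝ => c * Q z) (Q z) 1 := by
    simpa using (hasDerivAt_id (1:ℝ)).mul_const (Q z)
  exact (h5.unique h4).symm

lemma fderiv_apply_sum_rep {n : ℕ} (Q : (Fin n → ℝ) → ℝ) (z : Fin n → ℝ) :
    fderiv ℝ Q z z = ∑ m, z m * fderiv ℝ Q z (Pi.single m 1) := by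
  have hz : z = ∑ m, z m • (Pi.single m 1 : Fin n → ℝ) := by
    funext j
    simp [Finset.sum_apply, Pi.single_apply, Finset.sum_ite_eq']
  calc fderiv ℝ Q z z = fderiv ℝ Q z (∑ m, z m • (Pi.single m 1 : Fin n → ℝ)) := by
        rw [← hz]
    _ = ∑ m, z m * fderiv ℝ Q z (Pi.single m 1) := by rw [map_sum]; simp [smul_eq_mul]


/-- projective invariance of the Douglas tensor. If
`Ḡ^i = G^i + P y^i` with `P` smooth and positively 1-homogeneous, the Douglas
tensors of the two spray families coincide. -/
theorem douglas_projective_invariance {n : ℕ} {U : Set (Fin n → ℝ)} (hU : IsOpen U)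
    (G Gbar : Fin n → (Fin n → ℝ) → (Fin n → ℝ) → ℝ)
    (P : (Fin n → ℝ) → (Fin n → ℝ) → ℝ)
    (hGsmooth : ∀ i : Fin n, ContDiffOn ℝ (⊤ : ℕ∞)
      (fun p : (Fin n → ℝ) × (Fin n → ℝ) => G i p.1 p.2)
      (U ×ˢ {y : Fin n → ℝ | y ≠ 0}))
    (hGhom : ∀ i : Fin n, ∀ x ∈ U, ∀ y : Fin n → ℝ, y ≠ 0 → ∀ c : ℝ, 0 < c →
      G i x (c • y) = c ^ 2 * G i x y)
    (hGbarsmooth : ∀ i : Fin n, ContDiffOn ℝ (⊤ : ℕ∞)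
      (fun p : (Fin n → ℝ) × (Fin n → ℝ) => Gbar i p.1 p.2)
      (U ×ˢ {y : Fin n → ℝ | y ≠ 0}))
    (hGbarhom : ∀ i : Fin n, ∀ x ∈ U, ∀ y : Fin n → ℝ, y ≠ 0 → ∀ c : ℝ, 0 < c →
      Gbar i x (c • y) = c ^ 2 * Gbar i x y)
    (hPsmooth : ContDiffOn ℝ (⊤ : ℕ∞)
      (fun p : (Fin n → ℝ) × (Fin n → ℝ) => P p.1 p.2)
      (U ×ˢ {y : Fin n → ℝ | y ≠ 0}))
    (hPhom : ∀ x ∈ U, ∀ y : Fin n → ℝ, y ≠ 0 → ∀ c : ℝ, 0 < c →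
      P x (c • y) = c * P x y)
    (hproj : ∀ x ∈ U, ∀ y : Fin n → ℝ, y ≠ 0 → ∀ i : Fin n,
      Gbar i x y = G i x y + P x y * y i) :
    ∀ x ∈ U, ∀ y : Fin n → ℝ, y ≠ 0 → ∀ i j k l : Fin n,
      douglasOfSpray Gbar j i k l x y = douglasOfSpray G j i k l x y := by
  intro x hx y₀ hy₀ i j k l
  have hopen : IsOpen (U ×ˢ {y : Fin n → ℝ | y ≠ 0}) :=
    hU.prod (isOpen_ne : IsOpen {w : Fin n → ℝ | w ≠ 0})
  -- differentiability in y at fixed x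
  have hPd : ∀ z : Fin n → ℝ, z ≠ 0 → DifferentiableAt ℝ (P x) z := by
    intro z hz
    have h1 : DifferentiableAt ℝ (fun p : (Fin n → ℝ) × (Fin n → ℝ) => P p.1 p.2) (x, z) :=
      (hPsmooth.differentiableOn (by simp)).differentiableAt (hopen.mem_nhds ⟨hx, hz⟩)
    exact h1.comp z (DifferentiableAt.prodMk (differentiableAt_const x) differentiableAt_id)
  have hGd : ∀ m : Fin n, ∀ z : Fin n → ℝ, z ≠ 0 → DifferentiableAt ℝ (G m x) z := by
    intro m z hz
    have h1 : DifferentiableAt ℝ (fun p : (Fin n → ℝ) × (Fin n → ℝ) => G m p.1 p.2) (x, z) :=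
      ((hGsmooth m).differentiableOn (by simp)).differentiableAt (hopen.mem_nhds ⟨hx, hz⟩)
    exact h1.comp z (DifferentiableAt.prodMk (differentiableAt_const x) differentiableAt_id)
  -- derivative of Gbar in terms of G and P
  have hprojx : ∀ m : Fin n, ∀ z : Fin n → ℝ, z ≠ 0 → pdy m (Gbar m) x z
      = pdy m (G m) x z + (P x z + z m * fderiv ℝ (P x) z (Pi.single m 1)) := by
    intro m z hz
    have heq : Gbar m x =ᶠ[nhds z] fun z' => G m x z' + P x z' * z' m :=
      Filter.eventuallyEq_of_mem
        ((isOpen_ne : IsOpen {w : Fin n → ℝ | w ≠ 0}).mem_nhds hz)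
        (fun w hw => hproj x hx w hw m)
    have hpm : DifferentiableAt ℝ (fun z' : Fin n → ℝ => z' m) z :=
      (ContinuousLinearMap.proj m : (Fin n → ℝ) →L[ℝ] ℝ).differentiableAt
    have hfm : fderiv ℝ (fun z' : Fin n → ℝ => z' m) z = ContinuousLinearMap.proj m :=
      (ContinuousLinearMap.proj m : (Fin n → ℝ) →L[ℝ] ℝ).fderiv
    simp only [pdy]
    rw [heq.fderiv_eq, fderiv_fun_add (hGd m z hz) ((hPd z hz).fun_mul hpm),
      fderiv_fun_mul (hPd z hz) hpm]
    simp only [ContinuousLinearMap.add_apply, ContinuousLinearMap.smul_apply, hfm,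
      ContinuousLinearMap.proj_apply, Pi.single_eq_same, smul_eq_mul]
    ring
  -- the inner potentials agree on y ≠ 0
  have hkey : ∀ z : Fin n → ℝ, z ≠ 0 →
      (fun x y => Gbar i x y - (1 / ((n : ℝ) + 1)) * (∑ m, pdy m (Gbar m) x y) * y i) x z
      = (fun x y => G i x y - (1 / ((n : ℝ) + 1)) * (∑ m, pdy m (G m) x y) * y i) x z := by
    intro z hz
    have hsum : (∑ m, pdy m (Gbar m) x z)
        = (∑ m, pdy m (G m) x z) + ((n : ℝ) + 1) * P x z := by
      have heuler : fderiv ℝ (P x) z z = P x z :=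
        euler_one_homog (P x) z (hPd z hz) (fun c hc => hPhom x hx z hz c hc)
      have hrep : fderiv ℝ (P x) z z = ∑ m, z m * fderiv ℝ (P x) z (Pi.single m 1) :=
        fderiv_apply_sum_rep (P x) z
      calc (∑ m, pdy m (Gbar m) x z)
          = ∑ m, (pdy m (G m) x z + (P x z + z m * fderiv ℝ (P x) z (Pi.single m 1))) :=
            Finset.sum_congr rfl (fun m _ => hprojx m z hz)
        _ = (∑ m, pdy m (G m) x z) + ((n : ℝ) * P x z
              + ∑ m, z m * fderiv ℝ (P x) z (Pi.single m 1)) := by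
            rw [Finset.sum_add_distrib, Finset.sum_add_distrib, Finset.sum_const]
            simp [mul_comm]
        _ = (∑ m, pdy m (G m) x z) + ((n : ℝ) + 1) * P x z := by
            rw [← hrep, heuler]; ring
    have hne : ((n : ℝ) + 1) ≠ 0 := by positivity
    simp only [hproj x hx z hz i, hsum]
    field_simp
    ring
  have h1 := pdy_congr_aux
    (fun x y => Gbar i x y - (1 / ((n : ℝ) + 1)) * (∑ m, pdy m (Gbar m) x y) * y i)
    (fun x y => G i x y - (1 / ((n : ℝ) + 1)) * (∑ m, pdy m (G m) x y) * y i) x hkey l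
  have h2 := pdy_congr_aux _ _ x h1 k
  have h3 := pdy_congr_aux _ _ x h2 j
  exact h3 y₀ hy₀
end

section
/- Let F be a Finsler metric on an open set U ⊆ ℝ^n with n ≥ 3 that is a Douglas metric and is not Riemannian (its Cartan torsion does not vanish identically). Then F has isotropic mean Berwald curvature if and only if F has relatively isotropic Landsberg curvature. -/
open Set

noncomputable section

open Filter

namespace FinslerAux

variable {n : ℕ}

/-- The set of nonzero vectors. -/
def Om (n : ℕ) : Set (Fin n → ℝ) := {y | y ≠ 0}

lemma isOpen_Om : IsOpen (Om n) := isOpen_ne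

/-- Coordinate partial derivative operator. -/
def Dp (i : Fin n) (f : (Fin n → ℝ) → ℝ) : (Fin n → ℝ) → ℝ :=
  fun y => fderiv ℝ f y (Pi.single i 1)

lemma contDiffAt_of_on {f : (Fin n → ℝ) → ℝ} (hf : ContDiffOn ℝ (⊤ : ℕ∞) f (Om n))
    {y : Fin n → ℝ} (hy : y ∈ Om n) : ContDiffAt ℝ (⊤ : ℕ∞) f y :=
  hf.contDiffAt (isOpen_Om.mem_nhds hy)

lemma diffAt_of_on {f : (Fin n → ℝ) → ℝ} (hf : ContDiffOn ℝ (⊤ : ℕ∞) f (Om n))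
    {y : Fin n → ℝ} (hy : y ∈ Om n) : DifferentiableAt ℝ f y :=
  (contDiffAt_of_on hf hy).differentiableAt (by simp)

lemma Dp_congr {f g : (Fin n → ℝ) → ℝ} {y : Fin n → ℝ} (hy : y ∈ Om n)
    (h : ∀ z ∈ Om n, f z = g z) (i : Fin n) : Dp i f y = Dp i g y := by
  have : f =ᶠ[nhds y] g := by
    filter_upwards [isOpen_Om.mem_nhds hy] with z hz using h z hz
  simp only [Dp, this.fderiv_eq]

lemma cdOn_Dp {f : (Fin n → ℝ) → ℝ} (hf : ContDiffOn ℝ (⊤ : ℕ∞) f (Om n)) (i : Fin n) :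
    ContDiffOn ℝ (⊤ : ℕ∞) (Dp i f) (Om n) := by
  have h1 : ContDiffOn ℝ (⊤ : ℕ∞) (fderiv ℝ f) (Om n) :=
    hf.fderiv_of_isOpen isOpen_Om (by simp)
  exact h1.clm_apply contDiffOn_const

lemma cdOn_Dp2 {f : (Fin n → ℝ) → ℝ} (hf : ContDiffOn ℝ (⊤ : ℕ∞) f (Om n)) (i j : Fin n) :
    ContDiffOn ℝ (⊤ : ℕ∞) (Dp i (Dp j f)) (Om n) := cdOn_Dp (cdOn_Dp hf j) i

lemma Dp_add {f g : (Fin n → ℝ) → ℝ} {y : Fin n → ℝ}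
    (hf : DifferentiableAt ℝ f y) (hg : DifferentiableAt ℝ g y) (i : Fin n) :
    Dp i (fun z => f z + g z) y = Dp i f y + Dp i g y := by
  simp [Dp, fderiv_fun_add hf hg]

lemma Dp_sub {f g : (Fin n → ℝ) → ℝ} {y : Fin n → ℝ}
    (hf : DifferentiableAt ℝ f y) (hg : DifferentiableAt ℝ g y) (i : Fin n) :
    Dp i (fun z => f z - g z) y = Dp i f y - Dp i g y := by
  simp [Dp, fderiv_fun_sub hf hg]

lemma Dp_neg {f : (Fin n → ℝ) → ℝ} {y : Fin n → ℝ} (i : Fin n) :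
    Dp i (fun z => -f z) y = - Dp i f y := by
  simp [Dp, fderiv_neg]

lemma Dp_mul {f g : (Fin n → ℝ) → ℝ} {y : Fin n → ℝ}
    (hf : DifferentiableAt ℝ f y) (hg : DifferentiableAt ℝ g y) (i : Fin n) :
    Dp i (fun z => f z * g z) y = f y * Dp i g y + g y * Dp i f y := by
  simp [Dp, fderiv_fun_mul hf hg]

lemma Dp_const_mul {f : (Fin n → ℝ) → ℝ} {y : Fin n → ℝ}
    (hf : DifferentiableAt ℝ f y) (c : ℝ) (i : Fin n) :
    Dp i (fun z => c * f z) y = c * Dp i f y := by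
  simp [Dp, fderiv_const_mul hf c]

lemma Dp_const {y : Fin n → ℝ} (c : ℝ) (i : Fin n) :
    Dp i (fun _ => c) y = 0 := by
  simp [Dp]

lemma Dp_sum {ι : Type*} {s : Finset ι} {A : ι → (Fin n → ℝ) → ℝ} {y : Fin n → ℝ}
    (h : ∀ a ∈ s, DifferentiableAt ℝ (A a) y) (i : Fin n) :
    Dp i (fun z => ∑ a ∈ s, A a z) y = ∑ a ∈ s, Dp i (A a) y := by
  simp [Dp, fderiv_fun_sum h]

lemma Dp_proj {y : Fin n → ℝ} (i j : Fin n) :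
    Dp i (fun z => z j) y = if i = j then 1 else 0 := by
  have : (fun z : Fin n → ℝ => z j)
      = (ContinuousLinearMap.proj j : (Fin n → ℝ) →L[ℝ] ℝ) := rfl
  rw [Dp, this, ContinuousLinearMap.fderiv]
  simp [Pi.single_apply, eq_comm]

lemma diffAt_proj {y : Fin n → ℝ} (j : Fin n) :
    DifferentiableAt ℝ (fun z : Fin n → ℝ => z j) y :=
  (ContinuousLinearMap.proj j : (Fin n → ℝ) →L[ℝ] ℝ).differentiableAt

/-- Second derivatives of `C^∞` functions commute. -/
lemma Dp_comm {f : (Fin n → ℝ) → ℝ} (hf : ContDiffOn ℝ (⊤ : ℕ∞) f (Om n))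
    {y : Fin n → ℝ} (hy : y ∈ Om n) (a b : Fin n) :
    Dp a (Dp b f) y = Dp b (Dp a f) y := by
  have hsym : IsSymmSndFDerivAt ℝ f y :=
    (contDiffAt_of_on hf hy).isSymmSndFDerivAt (by rw [minSmoothness_of_isRCLikeNormedField]; exact WithTop.coe_le_coe.mpr le_top)
  have hder : DifferentiableAt ℝ (fderiv ℝ f) y :=
    (((contDiffAt_of_on hf hy).fderiv_right (m := (⊤ : ℕ∞)) ((by simp))).differentiableAt (by simp))
  have key : ∀ v w : Fin n → ℝ,
      fderiv ℝ (fun z => fderiv ℝ f z w) y v = fderiv ℝ (fderiv ℝ f) y v w := by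
    intro v w
    have := fderiv_clm_apply (c := fderiv ℝ f) (u := fun _ => w) hder
      (differentiableAt_const w)
    rw [show (fun z => fderiv ℝ f z w) = (fun z => (fderiv ℝ f z) ((fun _ => w) z)) from rfl,
      this]
    simp
  show fderiv ℝ (fun z => fderiv ℝ f z (Pi.single b 1)) y (Pi.single a 1)
      = fderiv ℝ (fun z => fderiv ℝ f z (Pi.single a 1)) y (Pi.single b 1)
  rw [key, key]
  exact hsym _ _


/-- positively homogeneous of degree `d` on nonzero vectors. -/
def Hom (d : ℕ) (f : (Fin n → ℝ) → ℝ) : Prop :=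
  ∀ c : ℝ, 0 < c → ∀ y : Fin n → ℝ, y ≠ 0 → f (c • y) = c ^ d * f y

lemma basis_expand (y : Fin n → ℝ) : y = ∑ i, y i • (Pi.single i (1:ℝ) : Fin n → ℝ) := by
  funext j
  simp [Finset.sum_apply, Pi.single_apply]

lemma fderiv_apply_self {f : (Fin n → ℝ) → ℝ} {y : Fin n → ℝ} :
    fderiv ℝ f y y = ∑ i, y i * Dp i f y := by
  have h1 : fderiv ℝ f y y = fderiv ℝ f y (∑ i, y i • (Pi.single i (1:ℝ) : Fin n → ℝ)) := by
    rw [← basis_expand]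
  rw [h1, map_sum]
  simp [Dp]

/-- Euler's relation for positively homogeneous functions. -/
lemma euler {f : (Fin n → ℝ) → ℝ} {d : ℕ} (hf : Hom d f) {y : Fin n → ℝ}
    (hy : y ≠ 0) (hdiff : DifferentiableAt ℝ f y) :
    ∑ i, y i * Dp i f y = (d : ℝ) * f y := by
  have hg : HasDerivAt (fun t : ℝ => t • y) y 1 := by
    simpa using (hasDerivAt_id (1:ℝ)).smul_const y
  have h1 : HasDerivAt (fun t : ℝ => f (t • y)) (fderiv ℝ f y y) 1 := by
    have hfd : HasFDerivAt f (fderiv ℝ f y) ((1:ℝ) • y) := by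
      simpa using hdiff.hasFDerivAt
    have := hfd.comp_hasDerivAt 1 hg
    exact this
  have h2 : HasDerivAt (fun t : ℝ => t ^ d * f y) ((d : ℝ) * f y) 1 := by
    simpa using (hasDerivAt_pow d (1:ℝ)).mul_const (f y)
  have hee : (fun t : ℝ => f (t • y)) =ᶠ[nhds (1:ℝ)] (fun t => t ^ d * f y) := by
    filter_upwards [lt_mem_nhds (zero_lt_one (α := ℝ))] with t ht
    exact hf t ht y hy
  have h2' : HasDerivAt (fun t : ℝ => f (t • y)) ((d : ℝ) * f y) 1 :=
    HasDerivAt.congr_of_eventuallyEq h2 hee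
  have := h1.unique h2'
  rw [← fderiv_apply_self, this]

/-- The partial derivative of a homogeneous function of degree `d+1` is homogeneous
of degree `d`. -/
lemma Dp_hom {f : (Fin n → ℝ) → ℝ} {d : ℕ} (hf : Hom (d + 1) f)
    (hsm : ContDiffOn ℝ (⊤ : ℕ∞) f {y : Fin n → ℝ | y ≠ 0}) (i : Fin n) :
    Hom d (Dp i f) := by
  intro c hc y hy
  have hcy : c • y ≠ 0 := smul_ne_zero (ne_of_gt hc) hy
  have hOm : IsOpen {y : Fin n → ℝ | y ≠ 0} := isOpen_ne
  have hdiff : DifferentiableAt ℝ f (c • y) :=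
    (hsm.contDiffAt (hOm.mem_nhds hcy)).differentiableAt (by simp)
  have hdiffy : DifferentiableAt ℝ f y :=
    (hsm.contDiffAt (hOm.mem_nhds hy)).differentiableAt (by simp)
  have hsc : HasFDerivAt (fun z : Fin n → ℝ => c • z)
      (c • ContinuousLinearMap.id ℝ (Fin n → ℝ)) y := by
    exact (c • ContinuousLinearMap.id ℝ (Fin n → ℝ)).hasFDerivAt
  have hcomp : HasFDerivAt (fun z => f (c • z))
      ((fderiv ℝ f (c • y)).comp (c • ContinuousLinearMap.id ℝ (Fin n → ℝ))) y :=
    (hdiff.hasFDerivAt.comp y hsc)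
  have hee : (fun z => f (c • z)) =ᶠ[nhds y] (fun z => c ^ (d+1) * f z) := by
    filter_upwards [hOm.mem_nhds hy] with z hz
    exact hf c hc z hz
  have h2 : HasFDerivAt (fun z => c ^ (d+1) * f z)
      (c ^ (d+1) • fderiv ℝ f y) y := by
    simpa using (hdiffy.hasFDerivAt.fun_const_smul (c ^ (d+1)) : _)
  have h2' : HasFDerivAt (fun z => f (c • z)) (c ^ (d+1) • fderiv ℝ f y) y :=
    h2.congr_of_eventuallyEq hee
  have heq := hcomp.unique h2'
  have happ : fderiv ℝ f (c • y) (c • (Pi.single i 1 : Fin n → ℝ))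
      = c ^ (d+1) * fderiv ℝ f y (Pi.single i 1) := by
    have h3 := congrArg (fun (L : (Fin n → ℝ) →L[ℝ] ℝ) => L (Pi.single i 1)) heq
    simpa using h3
  have hmap : fderiv ℝ f (c • y) (c • (Pi.single i 1 : Fin n → ℝ))
      = c * fderiv ℝ f (c • y) (Pi.single i 1) := by
    rw [map_smul]; simp
  show fderiv ℝ f (c • y) (Pi.single i 1) = c ^ d * fderiv ℝ f y (Pi.single i 1)
  have hc0 : c ≠ 0 := ne_of_gt hc
  have h4 : c * fderiv ℝ f (c • y) (Pi.single i 1)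
      = c * (c ^ d * fderiv ℝ f y (Pi.single i 1)) := by
    rw [← hmap, happ]; ring
  exact mul_left_cancel₀ hc0 h4


/-! ### Abstract layer at a fixed base point -/

section Abstract

variable {n : ℕ}

def fsq (f : (Fin n → ℝ) → ℝ) : (Fin n → ℝ) → ℝ := fun z => f z ^ 2

def gg (f : (Fin n → ℝ) → ℝ) (a b : Fin n) : (Fin n → ℝ) → ℝ :=
  fun z => (1/2 : ℝ) * Dp a (Dp b (fsq f)) z

def hhm (f : (Fin n → ℝ) → ℝ) (a b : Fin n) : (Fin n → ℝ) → ℝ :=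
  fun z => gg f a b z - Dp a f z * Dp b f z

def Cc (f : (Fin n → ℝ) → ℝ) (j k l : Fin n) : (Fin n → ℝ) → ℝ :=
  fun z => (1/4 : ℝ) * Dp j (Dp k (Dp l (fsq f))) z

def Sg (G : Fin n → (Fin n → ℝ) → ℝ) : (Fin n → ℝ) → ℝ := fun z => ∑ m, Dp m (G m) z

def Ee (G : Fin n → (Fin n → ℝ) → ℝ) (j k : Fin n) : (Fin n → ℝ) → ℝ :=
  fun z => (1/2 : ℝ) * Dp j (Dp k (Sg G)) z

def Bb (G : Fin n → (Fin n → ℝ) → ℝ) (j i k l : Fin n) : (Fin n → ℝ) → ℝ :=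
  Dp j (Dp k (Dp l (G i)))

def Ll (f : (Fin n → ℝ) → ℝ) (G : Fin n → (Fin n → ℝ) → ℝ) (j k l : Fin n) :
    (Fin n → ℝ) → ℝ :=
  fun z => -(1/2 : ℝ) * f z * ∑ i, Dp i f z * Bb G j i k l z

def dlt (a b : Fin n) : ℝ := if a = b then 1 else 0

/-- Context: fixed-point data of a Douglas–Finsler structure. -/
structure Ctx (n : ℕ) (f : (Fin n → ℝ) → ℝ) (G : Fin n → (Fin n → ℝ) → ℝ) : Prop where
  hn : 3 ≤ n
  hf : ContDiffOn ℝ (⊤ : ℕ∞) f (Om n)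
  hfpos : ∀ y : Fin n → ℝ, y ≠ 0 → 0 < f y
  hf1 : Hom 1 f
  hG : ∀ i, ContDiffOn ℝ (⊤ : ℕ∞) (G i) (Om n)
  hpos : ∀ y : Fin n → ℝ, y ≠ 0 → ∀ v : Fin n → ℝ, v ≠ 0 →
    0 < ∑ i, ∑ j, gg f i j y * v i * v j
  hdoug : ∀ y : Fin n → ℝ, y ≠ 0 → ∀ j i k l : Fin n,
    Dp j (Dp k (Dp l (fun z => G i z - (1/((n:ℝ)+1)) * (∑ m, Dp m (G m) z) * z i))) y = 0

variable {f : (Fin n → ℝ) → ℝ} {G : Fin n → (Fin n → ℝ) → ℝ}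

namespace Ctx

lemma hfsq (hC : Ctx n f G) : ContDiffOn ℝ (⊤ : ℕ∞) (fsq f) (Om n) := hC.hf.pow 2

lemma hfsq2 (hC : Ctx n f G) : Hom 2 (fsq f) := by
  intro c hc y hy
  simp only [fsq, hC.hf1 c hc y hy]
  ring

lemma hSg (hC : Ctx n f G) : ContDiffOn ℝ (⊤ : ℕ∞) (Sg G) (Om n) := by
  unfold Sg
  exact ContDiffOn.sum fun m _ => cdOn_Dp (hC.hG m) m

lemma hEe (hC : Ctx n f G) (j k : Fin n) : ContDiffOn ℝ (⊤ : ℕ∞) (Ee G j k) (Om n) := by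
  unfold Ee
  exact (cdOn_Dp2 hC.hSg j k).const_smul ((1:ℝ)/2) |>.congr (fun z _ => by simp)

end Ctx

/-- Three mutually-commuting-derivative helpers -/
lemma Dp_swap_inner {u : (Fin n → ℝ) → ℝ} (hu : ContDiffOn ℝ (⊤ : ℕ∞) u (Om n))
    {y : Fin n → ℝ} (hy : y ∈ Om n) (a b c : Fin n) :
    Dp a (Dp b (Dp c u)) y = Dp a (Dp c (Dp b u)) y :=
  Dp_congr hy (fun z hz => Dp_comm hu hz b c) a

lemma Dp_swap_outer {u : (Fin n → ℝ) → ℝ} (hu : ContDiffOn ℝ (⊤ : ℕ∞) u (Om n))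
    {y : Fin n → ℝ} (hy : y ∈ Om n) (a b c : Fin n) :
    Dp a (Dp b (Dp c u)) y = Dp b (Dp a (Dp c u)) y :=
  Dp_comm (cdOn_Dp hu c) hy a b

/-- rotate the innermost derivative to the front -/
lemma Dp_rot {u : (Fin n → ℝ) → ℝ} (hu : ContDiffOn ℝ (⊤ : ℕ∞) u (Om n))
    {y : Fin n → ℝ} (hy : y ∈ Om n) (a b c : Fin n) :
    Dp a (Dp b (Dp c u)) y = Dp c (Dp a (Dp b u)) y := by
  rw [Dp_swap_inner hu hy a b c, Dp_swap_outer hu hy a c b]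

section InCtx

variable (hC : Ctx n f G) {y : Fin n → ℝ} (hy : y ∈ Om n)
include hC hy

lemma dfsq (k : Fin n) : Dp k (fsq f) y = 2 * f y * Dp k f y := by
  have h1 : ∀ z ∈ Om n, fsq f z = f z * f z := fun z _ => by simp [fsq, sq]
  rw [Dp_congr hy h1 k, Dp_mul (diffAt_of_on hC.hf hy) (diffAt_of_on hC.hf hy)]
  ring

lemma gg_eq (a b : Fin n) :
    gg f a b y = Dp a f y * Dp b f y + f y * Dp a (Dp b f) y := by
  have h1 : ∀ z ∈ Om n, Dp b (fsq f) z = 2 * (f z * Dp b f z) := fun z hz => by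
    rw [dfsq hC hz b]; ring
  have h2 : Dp a (Dp b (fsq f)) y = Dp a (fun z => 2 * (f z * Dp b f z)) y :=
    Dp_congr hy h1 a
  rw [gg, h2, Dp_const_mul ((diffAt_of_on hC.hf hy).fun_mul
    (diffAt_of_on (cdOn_Dp hC.hf b) hy)),
    Dp_mul (diffAt_of_on hC.hf hy) (diffAt_of_on (cdOn_Dp hC.hf b) hy)]
  ring

lemma hh_eq (a b : Fin n) : hhm f a b y = f y * Dp a (Dp b f) y := by
  rw [hhm, gg_eq hC hy a b]; ring

lemma gg_symm (a b : Fin n) : gg f a b y = gg f b a y := by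
  unfold gg
  rw [Dp_comm hC.hfsq hy a b]

lemma hh_symm (a b : Fin n) : hhm f a b y = hhm f b a y := by
  unfold hhm
  rw [gg_symm hC hy a b]; ring

lemma C_eq (j k l : Fin n) :
    Cc f j k l y = (1/2 : ℝ) * (f y * Dp j (Dp k (Dp l f)) y
      + Dp j f y * Dp k (Dp l f) y + Dp k f y * Dp j (Dp l f) y
      + Dp l f y * Dp j (Dp k f) y) := by
  have h1 : ∀ z ∈ Om n, Dp l (fsq f) z = 2 * (f z * Dp l f z) := fun z hz => by
    rw [dfsq hC hz l]; ring
  have h2 : ∀ z ∈ Om n, Dp k (Dp l (fsq f)) z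
      = 2 * (Dp k f z * Dp l f z + f z * Dp k (Dp l f) z) := by
    intro z hz
    rw [Dp_congr hz h1 k, Dp_const_mul ((diffAt_of_on hC.hf hz).fun_mul
      (diffAt_of_on (cdOn_Dp hC.hf l) hz)),
      Dp_mul (diffAt_of_on hC.hf hz) (diffAt_of_on (cdOn_Dp hC.hf l) hz)]
    ring
  have h3 : Dp j (Dp k (Dp l (fsq f))) y
      = Dp j (fun z => 2 * (Dp k f z * Dp l f z + f z * Dp k (Dp l f) z)) y :=
    Dp_congr hy h2 j
  rw [Cc, h3]
  have d1 : DifferentiableAt ℝ (Dp k f) y := diffAt_of_on (cdOn_Dp hC.hf k) hy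
  have d2 : DifferentiableAt ℝ (Dp l f) y := diffAt_of_on (cdOn_Dp hC.hf l) hy
  have d3 : DifferentiableAt ℝ (Dp k (Dp l f)) y := diffAt_of_on (cdOn_Dp2 hC.hf k l) hy
  have d4 : DifferentiableAt ℝ f y := diffAt_of_on hC.hf hy
  rw [Dp_const_mul ((d1.fun_mul d2).fun_add (d4.fun_mul d3)), Dp_add (d1.fun_mul d2) (d4.fun_mul d3),
    Dp_mul d1 d2, Dp_mul d4 d3]
  ring

/-- Euler for `f` itself. -/
lemma eulerf : ∑ i, y i * Dp i f y = f y := by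
  have := euler hC.hf1 hy (diffAt_of_on hC.hf hy)
  simpa using this

/-- contraction of the fundamental tensor with `y` in the first slot. -/
lemma euler_g (b : Fin n) : ∑ a, y a * gg f a b y = f y * Dp b f y := by
  have h1 : Hom 1 (Dp b (fsq f)) := Dp_hom hC.hfsq2 hC.hfsq b
  have h2 := euler h1 hy (diffAt_of_on (cdOn_Dp hC.hfsq b) hy)
  have h3 : ∑ a, y a * gg f a b y = (1/2 : ℝ) * ∑ a, y a * Dp a (Dp b (fsq f)) y := by
    rw [Finset.mul_sum]
    refine Finset.sum_congr rfl fun a _ => ?_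
    rw [gg]; ring
  rw [h3, h2, dfsq hC hy b]
  ring

lemma euler_h (b : Fin n) : ∑ a, y a * hhm f a b y = 0 := by
  have h1 : ∑ a, y a * hhm f a b y
      = (∑ a, y a * gg f a b y) - (∑ a, y a * Dp a f y) * Dp b f y := by
    rw [Finset.sum_mul, ← Finset.sum_sub_distrib]
    refine Finset.sum_congr rfl fun a _ => by rw [hhm]; ring
  rw [h1, euler_g hC hy b, eulerf hC hy]
  ring

lemma eulerC (j k : Fin n) : ∑ l, y l * Cc f j k l y = 0 := by
  have h0 : Hom 0 (Dp j (Dp k (fsq f))) :=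
    Dp_hom (Dp_hom hC.hfsq2 hC.hfsq k) (cdOn_Dp hC.hfsq k) j
  have h2 := euler h0 hy (diffAt_of_on (cdOn_Dp2 hC.hfsq j k) hy)
  have h3 : ∀ l, Cc f j k l y = (1/4 : ℝ) * Dp l (Dp j (Dp k (fsq f))) y := by
    intro l
    rw [Cc, Dp_rot hC.hfsq hy j k l]
  calc ∑ l, y l * Cc f j k l y
      = (1/4 : ℝ) * ∑ l, y l * Dp l (Dp j (Dp k (fsq f))) y := by
        rw [Finset.mul_sum]
        exact Finset.sum_congr rfl fun l _ => by rw [h3 l]; ring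
    _ = 0 := by rw [h2]; simp

omit hC hy in
lemma dlt_mul_collapse (v : Fin n → ℝ) (a : Fin n) :
    ∑ i, v i * dlt a i = v a := by
  have : ∀ i, v i * dlt a i = if a = i then v i else 0 := by
    intro i; unfold dlt; split <;> simp
  simp only [this]
  simp

lemma douglas_expand (j i k l : Fin n) :
    Bb G j i k l y = (1/((n:ℝ)+1)) * (Dp j (Dp k (Dp l (Sg G))) y * y i
      + Dp k (Dp l (Sg G)) y * dlt j i + Dp j (Dp l (Sg G)) y * dlt k i
      + Dp j (Dp k (Sg G)) y * dlt l i) := by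
  set κ : ℝ := 1/((n:ℝ)+1) with hκ
  have hS := hC.hSg
  have hGi := hC.hG i
  have step1 : ∀ z ∈ Om n, Dp l (fun w => G i w - κ * Sg G w * w i) z
      = Dp l (G i) z - κ * (Dp l (Sg G) z * z i + Sg G z * dlt l i) := by
    intro z hz
    have dG : DifferentiableAt ℝ (G i) z := diffAt_of_on hGi hz
    have dS : DifferentiableAt ℝ (Sg G) z := diffAt_of_on hS hz
    have dP : DifferentiableAt ℝ (fun w : Fin n → ℝ => w i) z := diffAt_proj i
    have dκS : DifferentiableAt ℝ (fun w => κ * Sg G w) z := dS.const_mul κ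
    have h1 := Dp_sub dG (dκS.fun_mul dP) l
    have h2 := Dp_mul dκS dP l
    have h3 := Dp_const_mul dS κ l
    rw [show (fun w => G i w - κ * Sg G w * w i)
        = (fun w => G i w - (fun w => κ * Sg G w) w * w i) from rfl] at *
    rw [h1, h2, h3, Dp_proj]
    show _ = Dp l (G i) z - κ * (Dp l (Sg G) z * z i + Sg G z * dlt l i)
    unfold dlt
    ring
  have step2 : ∀ z ∈ Om n, Dp k (Dp l (fun w => G i w - κ * Sg G w * w i)) z
      = Dp k (Dp l (G i)) z - κ * (Dp k (Dp l (Sg G)) z * z i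
        + Dp l (Sg G) z * dlt k i + Dp k (Sg G) z * dlt l i) := by
    intro z hz
    rw [Dp_congr hz step1 k]
    have dG : DifferentiableAt ℝ (Dp l (G i)) z := diffAt_of_on (cdOn_Dp hGi l) hz
    have dS : DifferentiableAt ℝ (Sg G) z := diffAt_of_on hS hz
    have dDlS : DifferentiableAt ℝ (Dp l (Sg G)) z := diffAt_of_on (cdOn_Dp hS l) hz
    have dP : DifferentiableAt ℝ (fun w : Fin n → ℝ => w i) z := diffAt_proj i
    have dIn : DifferentiableAt ℝ
        (fun w => Dp l (Sg G) w * w i + Sg G w * dlt l i) z :=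
      (dDlS.fun_mul dP).fun_add (dS.mul_const (dlt l i))
    rw [Dp_sub dG (dIn.const_mul κ) k, Dp_const_mul dIn κ,
      Dp_add (dDlS.fun_mul dP) (dS.mul_const (dlt l i)), Dp_mul dDlS dP,
      show (fun w => Sg G w * dlt l i) = (fun w => Sg G w * (fun _ : Fin n → ℝ => dlt l i) w)
        from rfl,
      Dp_mul dS (differentiableAt_const (dlt l i)), Dp_const, Dp_proj]
    unfold dlt
    ring
  have step3 : Dp j (Dp k (Dp l (fun w => G i w - κ * Sg G w * w i))) y
      = Bb G j i k l y - κ * (Dp j (Dp k (Dp l (Sg G))) y * y i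
        + Dp k (Dp l (Sg G)) y * dlt j i + Dp j (Dp l (Sg G)) y * dlt k i
        + Dp j (Dp k (Sg G)) y * dlt l i) := by
    rw [Dp_congr hy step2 j]
    have dG : DifferentiableAt ℝ (Dp k (Dp l (G i))) y := diffAt_of_on (cdOn_Dp2 hGi k l) hy
    have dkl : DifferentiableAt ℝ (Dp k (Dp l (Sg G))) y := diffAt_of_on (cdOn_Dp2 hS k l) hy
    have dl : DifferentiableAt ℝ (Dp l (Sg G)) y := diffAt_of_on (cdOn_Dp hS l) hy
    have dk : DifferentiableAt ℝ (Dp k (Sg G)) y := diffAt_of_on (cdOn_Dp hS k) hy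
    have dP : DifferentiableAt ℝ (fun w : Fin n → ℝ => w i) y := diffAt_proj i
    have dIn : DifferentiableAt ℝ (fun w => Dp k (Dp l (Sg G)) w * w i
        + Dp l (Sg G) w * dlt k i + Dp k (Sg G) w * dlt l i) y :=
      ((dkl.fun_mul dP).fun_add (dl.mul_const (dlt k i))).fun_add (dk.mul_const (dlt l i))
    rw [Dp_sub dG (dIn.const_mul κ) j, Dp_const_mul dIn κ,
      Dp_add ((dkl.fun_mul dP).fun_add (dl.mul_const (dlt k i))) (dk.mul_const (dlt l i)),
      Dp_add (dkl.fun_mul dP) (dl.mul_const (dlt k i)), Dp_mul dkl dP,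
      show (fun w => Dp l (Sg G) w * dlt k i)
        = (fun w => Dp l (Sg G) w * (fun _ : Fin n → ℝ => dlt k i) w) from rfl,
      show (fun w => Dp k (Sg G) w * dlt l i)
        = (fun w => Dp k (Sg G) w * (fun _ : Fin n → ℝ => dlt l i) w) from rfl,
      Dp_mul dl (differentiableAt_const (dlt k i)),
      Dp_mul dk (differentiableAt_const (dlt l i)), Dp_const, Dp_const, Dp_proj]
    show _ = Bb G j i k l y - κ * _
    unfold Bb dlt
    ring
  have hd : Dp j (Dp k (Dp l (fun w => G i w - κ * Sg G w * w i))) y = 0 :=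
    hC.hdoug y hy j i k l
  rw [hd] at step3
  linarith [step3]

lemma Ee_symm (a b : Fin n) : Ee G a b y = Ee G b a y := by
  unfold Ee
  rw [Dp_comm hC.hSg hy a b]

lemma identityA (j k l : Fin n) :
    Ll f G j k l y = -(1/((n:ℝ)+1)) * (Dp l (Ee G j k) y * f y ^ 2
      + f y * (Dp j f y * Ee G k l y + Dp k f y * Ee G j l y + Dp l f y * Ee G j k y)) := by
  have hS := hC.hSg
  have hEp : Dp l (Ee G j k) y = (1/2 : ℝ) * Dp j (Dp k (Dp l (Sg G))) y := by
    have h1 : Dp l (Ee G j k) y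
        = Dp l (fun z => (1/2 : ℝ) * Dp j (Dp k (Sg G)) z) y := rfl
    rw [h1, Dp_const_mul (diffAt_of_on (cdOn_Dp2 hS j k) hy), ← Dp_rot hS hy j k l]
  have hsum : ∑ i, Dp i f y * Bb G j i k l y
      = (1/((n:ℝ)+1)) * (Dp j (Dp k (Dp l (Sg G))) y * f y
        + Dp k (Dp l (Sg G)) y * Dp j f y + Dp j (Dp l (Sg G)) y * Dp k f y
        + Dp j (Dp k (Sg G)) y * Dp l f y) := by
    have h1 : ∀ i, Dp i f y * Bb G j i k l y
        = (1/((n:ℝ)+1)) * (Dp j (Dp k (Dp l (Sg G))) y * (y i * Dp i f y)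
          + Dp k (Dp l (Sg G)) y * (Dp i f y * dlt j i)
          + Dp j (Dp l (Sg G)) y * (Dp i f y * dlt k i)
          + Dp j (Dp k (Sg G)) y * (Dp i f y * dlt l i)) := by
      intro i
      rw [douglas_expand hC hy j i k l]
      ring
    simp only [h1]
    rw [← Finset.mul_sum]
    congr 1
    rw [Finset.sum_add_distrib, Finset.sum_add_distrib, Finset.sum_add_distrib,
      ← Finset.mul_sum, ← Finset.mul_sum, ← Finset.mul_sum, ← Finset.mul_sum,
      eulerf hC hy, dlt_mul_collapse (fun i => Dp i f y) j,
      dlt_mul_collapse (fun i => Dp i f y) k, dlt_mul_collapse (fun i => Dp i f y) l]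
  show -(1/2 : ℝ) * f y * ∑ i, Dp i f y * Bb G j i k l y = _
  rw [hsum, hEp]
  show _ = -(1/((n:ℝ)+1)) * ((1/2 : ℝ) * Dp j (Dp k (Dp l (Sg G))) y * f y ^ 2
      + f y * (Dp j f y * ((1/2 : ℝ) * Dp k (Dp l (Sg G)) y)
        + Dp k f y * ((1/2 : ℝ) * Dp j (Dp l (Sg G)) y)
        + Dp l f y * ((1/2 : ℝ) * Dp j (Dp k (Sg G)) y)))
  ring

lemma forward_core (c : ℝ)
    (hiso : ∀ z : Fin n → ℝ, z ≠ 0 → ∀ a b : Fin n,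
      Ee G a b z = (((n:ℝ)+1)/2) * c * (f z)⁻¹ * hhm f a b z) (j k l : Fin n) :
    Ll f G j k l y + c * f y * Cc f j k l y = 0 := by
  have hiso' : ∀ z ∈ Om n, ∀ a b : Fin n,
      Ee G a b z = (((n:ℝ)+1)/2) * c * Dp a (Dp b f) z := by
    intro z hz a b
    rw [hiso z hz a b, hh_eq hC hz a b]
    have h0 : (f z)⁻¹ * f z = 1 := inv_mul_cancel₀ (ne_of_gt (hC.hfpos z hz))
    calc (((n:ℝ)+1)/2) * c * (f z)⁻¹ * (f z * Dp a (Dp b f) z)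
        = (((n:ℝ)+1)/2) * c * Dp a (Dp b f) z * ((f z)⁻¹ * f z) := by ring
      _ = (((n:ℝ)+1)/2) * c * Dp a (Dp b f) z := by rw [h0, mul_one]
  have hDl : Dp l (Ee G j k) y = (((n:ℝ)+1)/2) * c * Dp j (Dp k (Dp l f)) y := by
    have h1 : Dp l (Ee G j k) y
        = Dp l (fun z => (((n:ℝ)+1)/2) * c * Dp j (Dp k f) z) y :=
      Dp_congr hy (fun z hz => hiso' z hz j k) l
    rw [h1, Dp_const_mul (diffAt_of_on (cdOn_Dp2 hC.hf j k) hy), ← Dp_rot hC.hf hy j k l]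
  rw [identityA hC hy j k l, hDl, hiso' y (by exact hy) k l, hiso' y (by exact hy) j l,
    hiso' y (by exact hy) j k, C_eq hC hy j k l]
  have hne : (n:ℝ) + 1 ≠ 0 := by positivity
  field_simp
  ring

/-! ### Matrix layer -/

def gmF (f : (Fin n → ℝ) → ℝ) : (Fin n → ℝ) → Matrix (Fin n) (Fin n) ℝ :=
  fun z => Matrix.of fun a b => gg f a b z

omit hC hy in
lemma dlt_comm (a b : Fin n) : dlt a b = dlt b a := by
  unfold dlt
  by_cases h : a = b
  · rw [if_pos h, if_pos h.symm]
  · rw [if_neg h, if_neg (fun hh => h hh.symm)]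

omit hC hy in
lemma sum_dlt_diag : (∑ a : Fin n, dlt a a) = (n : ℝ) := by
  simp [dlt]

lemma gm_posdef : (gmF f y).PosDef := by
  rw [Matrix.posDef_iff_dotProduct_mulVec]
  constructor
  · ext a b
    simp only [Matrix.conjTranspose_apply, gmF, Matrix.of_apply, star_trivial]
    exact gg_symm hC hy b a
  · intro v hv
    have h := hC.hpos y hy v hv
    have heq : dotProduct (star v) (Matrix.mulVec (gmF f y) v)
        = ∑ i, ∑ j, gg f i j y * v i * v j := by
      show (∑ i, (star v) i * ∑ j, gg f i j y * v j) = _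
      refine Finset.sum_congr rfl fun i _ => ?_
      simp only [Pi.star_apply, star_trivial, Finset.mul_sum]
      exact Finset.sum_congr rfl fun j _ => by ring
    show 0 < dotProduct (star v) (Matrix.mulVec (gmF f y) v)
    rw [heq]
    exact h

lemma gm_det_ne : (gmF f y).det ≠ 0 := ne_of_gt (gm_posdef hC hy).det_pos

lemma ginv_mul_gm (a b : Fin n) :
    ∑ m, (gmF f y)⁻¹ a m * gg f m b y = dlt a b := by
  have h := Matrix.nonsing_inv_mul (gmF f y) (isUnit_iff_ne_zero.mpr (gm_det_ne hC hy))
  have h2 := congrFun (congrFun h a) b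
  rw [Matrix.mul_apply] at h2
  have h3 : ∀ m, (gmF f y)⁻¹ a m * gmF f y m b = (gmF f y)⁻¹ a m * gg f m b y := fun m => rfl
  simp only [h3] at h2
  rw [h2, Matrix.one_apply]
  rfl

lemma ginv_symm (a b : Fin n) : (gmF f y)⁻¹ a b = (gmF f y)⁻¹ b a := by
  have hsym : (gmF f y).transpose = gmF f y := by
    ext a b
    simp only [Matrix.transpose_apply, gmF, Matrix.of_apply]
    exact gg_symm hC hy b a
  have h := Matrix.transpose_nonsing_inv (gmF f y)
  rw [hsym] at h
  have := congrFun (congrFun h a) b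
  rw [Matrix.transpose_apply] at this
  exact this.symm

lemma ginv_fDf (b : Fin n) :
    ∑ m, (gmF f y)⁻¹ b m * Dp m f y = y b / f y := by
  have hf0 : f y ≠ 0 := ne_of_gt (hC.hfpos y hy)
  have key : ∑ m, (gmF f y)⁻¹ b m * (f y * Dp m f y) = y b := by
    have h1 : ∀ m, f y * Dp m f y = ∑ a, y a * gg f a m y := fun m => (euler_g hC hy m).symm
    calc ∑ m, (gmF f y)⁻¹ b m * (f y * Dp m f y)
        = ∑ m, ∑ a, y a * ((gmF f y)⁻¹ b m * gg f a m y) := by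
          refine Finset.sum_congr rfl fun m _ => ?_
          rw [h1 m, Finset.mul_sum]
          exact Finset.sum_congr rfl fun a _ => by ring
      _ = ∑ a, y a * ∑ m, (gmF f y)⁻¹ b m * gg f m a y := by
          rw [Finset.sum_comm]
          refine Finset.sum_congr rfl fun a _ => ?_
          rw [Finset.mul_sum]
          refine Finset.sum_congr rfl fun m _ => ?_
          rw [gg_symm hC hy a m]
      _ = ∑ a, y a * dlt b a := by
          refine Finset.sum_congr rfl fun a _ => ?_
          rw [ginv_mul_gm hC hy b a]
      _ = y b := dlt_mul_collapse y b
  rw [eq_div_iff hf0, Finset.sum_mul]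
  rw [← key]
  exact Finset.sum_congr rfl fun m _ => by ring

lemma ginv_h (a b : Fin n) :
    ∑ m, (gmF f y)⁻¹ a m * hhm f m b y = dlt a b - y a * Dp b f y / f y := by
  have h1 : ∀ m, (gmF f y)⁻¹ a m * hhm f m b y
      = (gmF f y)⁻¹ a m * gg f m b y - Dp b f y * ((gmF f y)⁻¹ a m * Dp m f y) := by
    intro m
    rw [hhm]
    ring
  rw [Finset.sum_congr rfl fun m _ => h1 m, Finset.sum_sub_distrib, ← Finset.mul_sum,
    ginv_mul_gm hC hy a b, ginv_fDf hC hy a]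
  ring

lemma trace_gh : ∑ a, ∑ b, (gmF f y)⁻¹ a b * hhm f a b y = (n : ℝ) - 1 := by
  have h1 : ∀ a, ∑ b, (gmF f y)⁻¹ a b * hhm f a b y = dlt a a - y a * Dp a f y / f y := by
    intro a
    rw [← ginv_h hC hy a a]
    exact Finset.sum_congr rfl fun b _ => by rw [hh_symm hC hy a b]
  rw [Finset.sum_congr rfl fun a _ => h1 a, Finset.sum_sub_distrib, sum_dlt_diag]
  have hf0 : f y ≠ 0 := ne_of_gt (hC.hfpos y hy)
  have h2 : ∑ a, y a * Dp a f y / f y = 1 := by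
    rw [← Finset.sum_div, eulerf hC hy, div_self hf0]
  rw [h2]

/-! ### Smoothness of inverse matrix entries -/

omit hC hy in
lemma cdOn_det {M : (Fin n → ℝ) → Matrix (Fin n) (Fin n) ℝ}
    (h : ∀ a b, ContDiffOn ℝ (⊤ : ℕ∞) (fun z => M z a b) (Om n)) :
    ContDiffOn ℝ (⊤ : ℕ∞) (fun z => (M z).det) (Om n) := by
  have hrep : (fun z => (M z).det)
      = fun z => ∑ σ : Equiv.Perm (Fin n),
          (((Equiv.Perm.sign σ : ℤˣ) : ℤ) : ℝ) * ∏ i, M z (σ i) i := by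
    funext z
    rw [Matrix.det_apply']
  rw [hrep]
  apply ContDiffOn.sum
  intro σ _
  exact contDiffOn_const.mul (contDiffOn_prod (fun i _ => h (σ i) i))

omit hC hy in
lemma cdOn_ginv {M : (Fin n → ℝ) → Matrix (Fin n) (Fin n) ℝ}
    (h : ∀ a b, ContDiffOn ℝ (⊤ : ℕ∞) (fun z => M z a b) (Om n))
    (hdet : ∀ z ∈ Om n, (M z).det ≠ 0) (a b : Fin n) :
    ContDiffOn ℝ (⊤ : ℕ∞) (fun z => (M z)⁻¹ a b) (Om n) := by
  have hrep : (fun z => (M z)⁻¹ a b)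
      = fun z => ((M z).det)⁻¹ * (M z).adjugate a b := by
    funext z
    rw [Matrix.inv_def, Matrix.smul_apply, Ring.inverse_eq_inv', smul_eq_mul]
  have hadj : ContDiffOn ℝ (⊤ : ℕ∞) (fun z => (M z).adjugate a b) (Om n) := by
    have h2 : (fun z => (M z).adjugate a b)
        = fun z => ((M z).updateRow b (Pi.single a 1)).det := by
      funext z
      rw [Matrix.adjugate_apply]
    rw [h2]
    apply cdOn_det
    intro p q
    by_cases hp : p = b
    · have h3 : (fun z => ((M z).updateRow b (Pi.single a 1)) p q)
          = fun _ => (Pi.single a (1:ℝ) : Fin n → ℝ) q := by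
        funext z
        rw [Matrix.updateRow_apply, if_pos hp]
      rw [h3]
      exact contDiffOn_const
    · have h3 : (fun z => ((M z).updateRow b (Pi.single a 1)) p q)
          = fun z => M z p q := by
        funext z
        rw [Matrix.updateRow_apply, if_neg hp]
      rw [h3]
      exact h p q
  rw [hrep]
  exact ((cdOn_det h).inv hdet).mul hadj

-- gg entries are smooth
omit hy in
lemma cdOn_gg (a b : Fin n) : ContDiffOn ℝ (⊤ : ℕ∞) (fun z => gg f a b z) (Om n) :=
  contDiffOn_const.mul (cdOn_Dp2 hC.hfsq a b)

omit hy in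
lemma cdOn_ginvE (a b : Fin n) :
    ContDiffOn ℝ (⊤ : ℕ∞) (fun z => (gmF f z)⁻¹ a b) (Om n) :=
  cdOn_ginv (fun a b => cdOn_gg hC a b) (fun z hz => gm_det_ne hC hz) a b

end InCtx

def Et (f : (Fin n → ℝ) → ℝ) (G : Fin n → (Fin n → ℝ) → ℝ) (c : ℝ) (a b : Fin n) :
    (Fin n → ℝ) → ℝ :=
  fun z => Ee G a b z - (((n:ℝ)+1)/2) * c * Dp a (Dp b f) z

def Tt (f : (Fin n → ℝ) → ℝ) (G : Fin n → (Fin n → ℝ) → ℝ) (c : ℝ) (a b : Fin n) :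
    (Fin n → ℝ) → ℝ :=
  fun z => f z * Et f G c a b z

section Backward

variable (hC : Ctx n f G) {y : Fin n → ℝ} (hy : y ∈ Om n) {c : ℝ}
include hC hy

omit hy in
lemma cdOn_Et (c : ℝ) (a b : Fin n) : ContDiffOn ℝ (⊤ : ℕ∞) (Et f G c a b) (Om n) := by
  unfold Et
  exact (hC.hEe a b).sub (contDiffOn_const.mul (cdOn_Dp2 hC.hf a b))

omit hy in
lemma cdOn_Tt (c : ℝ) (a b : Fin n) : ContDiffOn ℝ (⊤ : ℕ∞) (Tt f G c a b) (Om n) := by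
  unfold Tt
  exact hC.hf.mul (cdOn_Et hC c a b)

lemma Et_symm (a b : Fin n) : Et f G c a b y = Et f G c b a y := by
  unfold Et
  rw [Ee_symm hC hy a b, Dp_comm hC.hf hy a b]

lemma Tt_symm (a b : Fin n) : Tt f G c a b y = Tt f G c b a y := by
  unfold Tt
  rw [Et_symm hC hy a b]

lemma Eq0 (hrel : ∀ z : Fin n → ℝ, z ≠ 0 → ∀ j k l : Fin n,
      Ll f G j k l z + c * f z * Cc f j k l z = 0) (j k l : Fin n) :
    f y * Dp l (Et f G c j k) y + Dp j f y * Et f G c k l y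
      + Dp k f y * Et f G c j l y + Dp l f y * Et f G c j k y = 0 := by
  have hA := identityA hC hy j k l
  have hr := hrel y hy j k l
  have hCq := C_eq hC hy j k l
  have hne : (n:ℝ)+1 ≠ 0 := by positivity
  rw [hA] at hr
  set X := Dp l (Ee G j k) y * f y ^ 2 + f y * (Dp j f y * Ee G k l y
    + Dp k f y * Ee G j l y + Dp l f y * Ee G j k y) with hX
  have hkey : X = ((n:ℝ)+1) * (c * f y * Cc f j k l y) := by
    have h3 : (1/((n:ℝ)+1)) * X = c * f y * Cc f j k l y := by linarith
    calc X = (((n:ℝ)+1) * (1/((n:ℝ)+1))) * X := by field_simp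
      _ = ((n:ℝ)+1) * ((1/((n:ℝ)+1)) * X) := by ring
      _ = ((n:ℝ)+1) * (c * f y * Cc f j k l y) := by rw [h3]
  have hDlEt : Dp l (Et f G c j k) y = Dp l (Ee G j k) y
      - (((n:ℝ)+1)/2) * c * Dp j (Dp k (Dp l f)) y := by
    have d1 : DifferentiableAt ℝ (Ee G j k) y := diffAt_of_on (hC.hEe j k) hy
    have d2 : DifferentiableAt ℝ (fun z => (((n:ℝ)+1)/2) * c * Dp j (Dp k f) z) y :=
      (diffAt_of_on (cdOn_Dp2 hC.hf j k) hy).const_mul _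
    have h1 : Dp l (Et f G c j k) y = Dp l (Ee G j k) y
        - Dp l (fun z => (((n:ℝ)+1)/2) * c * Dp j (Dp k f) z) y := Dp_sub d1 d2 l
    rw [h1, Dp_const_mul (diffAt_of_on (cdOn_Dp2 hC.hf j k) hy) _ l,
      ← Dp_rot hC.hf hy j k l]
  have hf0 : f y ≠ 0 := ne_of_gt (hC.hfpos y hy)
  have hmul : f y * (f y * Dp l (Et f G c j k) y + Dp j f y * Et f G c k l y
      + Dp k f y * Et f G c j l y + Dp l f y * Et f G c j k y) = 0 := by
    have e1 : Et f G c k l y = Ee G k l y - (((n:ℝ)+1)/2)*c*Dp k (Dp l f) y := rfl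
    have e2 : Et f G c j l y = Ee G j l y - (((n:ℝ)+1)/2)*c*Dp j (Dp l f) y := rfl
    have e3 : Et f G c j k y = Ee G j k y - (((n:ℝ)+1)/2)*c*Dp j (Dp k f) y := rfl
    rw [hDlEt, e1, e2, e3]
    linear_combination hkey + ((n:ℝ)+1) * c * f y * hCq
  exact (mul_eq_zero.mp hmul).resolve_left hf0

lemma Eq1 (hrel : ∀ z : Fin n → ℝ, z ≠ 0 → ∀ j k l : Fin n,
      Ll f G j k l z + c * f z * Cc f j k l z = 0) (j k l : Fin n) :
    f y * Dp l (Tt f G c j k) y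
      = -(Dp j f y * Tt f G c k l y + Dp k f y * Tt f G c j l y) := by
  have dEt : DifferentiableAt ℝ (Et f G c j k) y := diffAt_of_on (cdOn_Et hC c j k) hy
  have dmul : Dp l (Tt f G c j k) y
      = f y * Dp l (Et f G c j k) y + Et f G c j k y * Dp l f y :=
    Dp_mul (diffAt_of_on hC.hf hy) dEt l
  have h0 := Eq0 hC hy hrel j k l
  have e1 : Tt f G c k l y = f y * Et f G c k l y := rfl
  have e2 : Tt f G c j l y = f y * Et f G c j l y := rfl
  have e3 : Tt f G c j k y = f y * Et f G c j k y := rfl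
  rw [dmul, e1, e2]
  linear_combination (f y) * h0

lemma Eq2 (hrel : ∀ z : Fin n → ℝ, z ≠ 0 → ∀ j k l : Fin n,
      Ll f G j k l z + c * f z * Cc f j k l z = 0) (j k l m : Fin n) :
    hhm f j m y * Tt f G c k l y + hhm f k m y * Tt f G c j l y
      = hhm f j l y * Tt f G c k m y + hhm f k l y * Tt f G c j m y := by
  have df : DifferentiableAt ℝ f y := diffAt_of_on hC.hf hy
  have dDf : ∀ a, DifferentiableAt ℝ (Dp a f) y :=
    fun a => diffAt_of_on (cdOn_Dp hC.hf a) hy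
  have dT : ∀ a b, DifferentiableAt ℝ (Tt f G c a b) y :=
    fun a b => diffAt_of_on (cdOn_Tt hC c a b) hy
  have dDT : ∀ a b e, DifferentiableAt ℝ (Dp e (Tt f G c a b)) y :=
    fun a b e => diffAt_of_on (cdOn_Dp (cdOn_Tt hC c a b) e) hy
  -- first expanded derivative identity (apply `Dp m` to Eq1 at (j,k,l))
  have S1 : f y * Dp m (Dp l (Tt f G c j k)) y + Dp l (Tt f G c j k) y * Dp m f y
      = -(Dp j f y * Dp m (Tt f G c k l) y + Tt f G c k l y * Dp m (Dp j f) y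
          + (Dp k f y * Dp m (Tt f G c j l) y + Tt f G c j l y * Dp m (Dp k f) y)) := by
    have h1 := Dp_congr hy (fun z hz => Eq1 hC hz hrel j k l) m
    rw [Dp_mul df (dDT j k l) m] at h1
    rw [Dp_neg m, Dp_add ((dDf j).fun_mul (dT k l)) ((dDf k).fun_mul (dT j l)),
      Dp_mul (dDf j) (dT k l) m, Dp_mul (dDf k) (dT j l) m] at h1
    exact h1
  -- second expanded derivative identity (apply `Dp l` to Eq1 at (j,k,m))
  have S2 : f y * Dp l (Dp m (Tt f G c j k)) y + Dp m (Tt f G c j k) y * Dp l f y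
      = -(Dp j f y * Dp l (Tt f G c k m) y + Tt f G c k m y * Dp l (Dp j f) y
          + (Dp k f y * Dp l (Tt f G c j m) y + Tt f G c j m y * Dp l (Dp k f) y)) := by
    have h1 := Dp_congr hy (fun z hz => Eq1 hC hz hrel j k m) l
    rw [Dp_mul df (dDT j k m) l] at h1
    rw [Dp_neg l, Dp_add ((dDf j).fun_mul (dT k m)) ((dDf k).fun_mul (dT j m)),
      Dp_mul (dDf j) (dT k m) l, Dp_mul (dDf k) (dT j m) l] at h1
    exact h1
  have B1 : Dp m (Dp j f) y = Dp j (Dp m f) y := Dp_comm hC.hf hy m j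
  have B2 : Dp m (Dp k f) y = Dp k (Dp m f) y := Dp_comm hC.hf hy m k
  have B3 : Dp l (Dp j f) y = Dp j (Dp l f) y := Dp_comm hC.hf hy l j
  have B4 : Dp l (Dp k f) y = Dp k (Dp l f) y := Dp_comm hC.hf hy l k
  rw [B1, B2] at S1
  rw [B3, B4] at S2
  have A1 := Eq1 hC hy hrel k l m
  have A2 := Eq1 hC hy hrel j l m
  have A3 := Eq1 hC hy hrel k m l
  have A4 := Eq1 hC hy hrel j m l
  have A5 := Eq1 hC hy hrel j k l
  have A6 := Eq1 hC hy hrel j k m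
  have A7 : Dp m (Dp l (Tt f G c j k)) y = Dp l (Dp m (Tt f G c j k)) y :=
    Dp_comm (cdOn_Tt hC c j k) hy m l
  have A8 : Tt f G c l m y = Tt f G c m l y := Tt_symm hC hy l m
  rw [hh_eq hC hy j m, hh_eq hC hy k m, hh_eq hC hy j l, hh_eq hC hy k l]
  linear_combination (f y)*S1 - (f y)*S2 - (f y)^2*A7 - Dp m f y*A5 + Dp l f y*A6
    - Dp j f y*A1 - Dp k f y*A2 + Dp j f y*A3 + Dp k f y*A4
    + 2*(Dp j f y)*(Dp k f y)*A8

lemma Eq3 (hrel : ∀ z : Fin n → ℝ, z ≠ 0 → ∀ j k l : Fin n,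
      Ll f G j k l z + c * f z * Cc f j k l z = 0) (k m l : Fin n) :
    hhm f k m y * (∑ j, y j * Tt f G c j l y)
      = hhm f k l y * (∑ j, y j * Tt f G c j m y) := by
  have hs : ∑ j, y j * (hhm f j m y * Tt f G c k l y + hhm f k m y * Tt f G c j l y)
      = ∑ j, y j * (hhm f j l y * Tt f G c k m y + hhm f k l y * Tt f G c j m y) :=
    Finset.sum_congr rfl fun j _ => by rw [Eq2 hC hy hrel j k l m]
  have expand : ∀ (A C : Fin n → ℝ) (t b : ℝ),
      ∑ j, y j * (A j * t + b * C j) = (∑ j, y j * A j) * t + b * (∑ j, y j * C j) := by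
    intro A C t b
    calc ∑ j, y j * (A j * t + b * C j)
        = ∑ j, (y j * A j * t + b * (y j * C j)) :=
          Finset.sum_congr rfl fun j _ => by ring
      _ = (∑ j, y j * A j * t) + ∑ j, b * (y j * C j) := Finset.sum_add_distrib
      _ = (∑ j, y j * A j) * t + b * ∑ j, y j * C j := by
          rw [← Finset.sum_mul, ← Finset.mul_sum]
  rw [expand (fun j => hhm f j m y) (fun j => Tt f G c j l y),
    expand (fun j => hhm f j l y) (fun j => Tt f G c j m y)] at hs
  rw [euler_h hC hy m, euler_h hC hy l] at hs
  simpa using hs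

lemma yu_zero (hrel : ∀ z : Fin n → ℝ, z ≠ 0 → ∀ j k l : Fin n,
      Ll f G j k l z + c * f z * Cc f j k l z = 0) :
    ∑ l, y l * (∑ j, y j * Tt f G c j l y) = 0 := by
  by_contra hne
  have hzero : ∀ k m, hhm f k m y = 0 := by
    intro k m
    have hs : ∑ l, y l * (hhm f k m y * (∑ j, y j * Tt f G c j l y))
        = ∑ l, y l * (hhm f k l y * (∑ j, y j * Tt f G c j m y)) :=
      Finset.sum_congr rfl fun l _ => by rw [Eq3 hC hy hrel k m l]
    have h1 : ∑ l, y l * (hhm f k m y * (∑ j, y j * Tt f G c j l y))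
        = hhm f k m y * ∑ l, y l * (∑ j, y j * Tt f G c j l y) := by
      rw [Finset.mul_sum]
      exact Finset.sum_congr rfl fun l _ => by ring
    have h2 : ∑ l, y l * (hhm f k l y * (∑ j, y j * Tt f G c j m y))
        = (∑ l, y l * hhm f k l y) * (∑ j, y j * Tt f G c j m y) := by
      rw [Finset.sum_mul]
      exact Finset.sum_congr rfl fun l _ => by ring
    have h3 : ∑ l, y l * hhm f k l y = 0 := by
      rw [Finset.sum_congr rfl fun l (_ : l ∈ Finset.univ) => by rw [hh_symm hC hy k l]]
      exact euler_h hC hy k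
    rw [h1, h2, h3, zero_mul] at hs
    exact (mul_eq_zero.mp hs).resolve_right hne
  have htr := trace_gh hC hy
  rw [Finset.sum_congr rfl (fun a (_ : a ∈ Finset.univ) =>
    Finset.sum_congr rfl fun b (_ : b ∈ Finset.univ) => by rw [hzero a b, mul_zero])] at htr
  simp only [Finset.sum_const_zero] at htr
  have h3n : (3:ℝ) ≤ (n:ℝ) := by exact_mod_cast hC.hn
  linarith

lemma u_zero (hrel : ∀ z : Fin n → ℝ, z ≠ 0 → ∀ j k l : Fin n,
      Ll f G j k l z + c * f z * Cc f j k l z = 0) (l : Fin n) :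
    ∑ j, y j * Tt f G c j l y = 0 := by
  have hyu := yu_zero hC hy hrel
  have hs : ∑ k, ∑ m, (gmF f y)⁻¹ k m * (hhm f k m y * (∑ j, y j * Tt f G c j l y))
      = ∑ k, ∑ m, (gmF f y)⁻¹ k m * (hhm f k l y * (∑ j, y j * Tt f G c j m y)) :=
    Finset.sum_congr rfl fun k _ => Finset.sum_congr rfl fun m _ => by
      rw [Eq3 hC hy hrel k m l]
  have h1 : ∑ k, ∑ m, (gmF f y)⁻¹ k m * (hhm f k m y * (∑ j, y j * Tt f G c j l y))
      = ((n:ℝ)-1) * (∑ j, y j * Tt f G c j l y) := by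
    rw [← trace_gh hC hy, Finset.sum_mul]
    exact Finset.sum_congr rfl fun k _ => by
      rw [Finset.sum_mul]
      exact Finset.sum_congr rfl fun m _ => by ring
  have h2 : ∑ k, ∑ m, (gmF f y)⁻¹ k m * (hhm f k l y * (∑ j, y j * Tt f G c j m y))
      = ∑ m, (∑ j, y j * Tt f G c j m y) * (dlt m l - y m * Dp l f y / f y) := by
    rw [Finset.sum_comm]
    refine Finset.sum_congr rfl fun m _ => ?_
    have hin : ∑ k, (gmF f y)⁻¹ k m * (hhm f k l y * (∑ j, y j * Tt f G c j m y))
        = (∑ j, y j * Tt f G c j m y) * (∑ k, (gmF f y)⁻¹ m k * hhm f k l y) := by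
      rw [Finset.mul_sum]
      exact Finset.sum_congr rfl fun k _ => by rw [ginv_symm hC hy k m]; ring
    rw [hin, ginv_h hC hy m l]
  have h3 : ∑ m, (∑ j, y j * Tt f G c j m y) * (dlt m l - y m * Dp l f y / f y)
      = (∑ j, y j * Tt f G c j l y)
        - (∑ m, y m * (∑ j, y j * Tt f G c j m y)) * (Dp l f y / f y) := by
    have hA : ∑ m, (∑ j, y j * Tt f G c j m y) * dlt m l
        = ∑ j, y j * Tt f G c j l y := by
      rw [Finset.sum_congr rfl (fun m (_ : m ∈ Finset.univ) => by rw [dlt_comm m l])]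
      exact dlt_mul_collapse (fun m => ∑ j, y j * Tt f G c j m y) l
    calc ∑ m, (∑ j, y j * Tt f G c j m y) * (dlt m l - y m * Dp l f y / f y)
        = ∑ m, ((∑ j, y j * Tt f G c j m y) * dlt m l
            - y m * (∑ j, y j * Tt f G c j m y) * (Dp l f y / f y)) :=
          Finset.sum_congr rfl fun m _ => by ring
      _ = (∑ m, (∑ j, y j * Tt f G c j m y) * dlt m l)
            - ∑ m, y m * (∑ j, y j * Tt f G c j m y) * (Dp l f y / f y) :=
          Finset.sum_sub_distrib ..
      _ = (∑ j, y j * Tt f G c j l y)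
            - (∑ m, y m * (∑ j, y j * Tt f G c j m y)) * (Dp l f y / f y) := by
          rw [hA, ← Finset.sum_mul]
  rw [h1, h2, h3, hyu, zero_mul, sub_zero] at hs
  have h3n : (3:ℝ) ≤ (n:ℝ) := by exact_mod_cast hC.hn
  have : ((n:ℝ)-2) * (∑ j, y j * Tt f G c j l y) = 0 := by linarith
  have hne2 : (n:ℝ)-2 ≠ 0 := by linarith
  exact (mul_eq_zero.mp this).resolve_left hne2

lemma TlinH (hrel : ∀ z : Fin n → ℝ, z ≠ 0 → ∀ j k l : Fin n,
      Ll f G j k l z + c * f z * Cc f j k l z = 0) (k l : Fin n) :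
    ((n:ℝ)-1) * Tt f G c k l y
      = hhm f k l y * (∑ a, ∑ b, (gmF f y)⁻¹ a b * Tt f G c a b y) := by
  have hs : ∑ j, ∑ m, (gmF f y)⁻¹ j m
        * (hhm f j m y * Tt f G c k l y + hhm f k m y * Tt f G c j l y)
      = ∑ j, ∑ m, (gmF f y)⁻¹ j m
        * (hhm f j l y * Tt f G c k m y + hhm f k l y * Tt f G c j m y) :=
    Finset.sum_congr rfl fun j _ => Finset.sum_congr rfl fun m _ => by
      rw [Eq2 hC hy hrel j k l m]
  have split : ∀ (P Q : Fin n → Fin n → ℝ),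
      (∑ j, ∑ m, (gmF f y)⁻¹ j m * (P j m + Q j m))
      = (∑ j, ∑ m, (gmF f y)⁻¹ j m * P j m) + (∑ j, ∑ m, (gmF f y)⁻¹ j m * Q j m) := by
    intro P Q
    rw [← Finset.sum_add_distrib]
    refine Finset.sum_congr rfl fun j _ => ?_
    rw [← Finset.sum_add_distrib]
    exact Finset.sum_congr rfl fun m _ => by ring
  rw [split (fun j m => hhm f j m y * Tt f G c k l y)
      (fun j m => hhm f k m y * Tt f G c j l y),
    split (fun j m => hhm f j l y * Tt f G c k m y)
      (fun j m => hhm f k l y * Tt f G c j m y)] at hs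
  have t1 : ∑ j, ∑ m, (gmF f y)⁻¹ j m * (hhm f j m y * Tt f G c k l y)
      = ((n:ℝ)-1) * Tt f G c k l y := by
    rw [← trace_gh hC hy, Finset.sum_mul]
    exact Finset.sum_congr rfl fun j _ => by
      rw [Finset.sum_mul]
      exact Finset.sum_congr rfl fun m _ => by ring
  have t2 : ∑ j, ∑ m, (gmF f y)⁻¹ j m * (hhm f k m y * Tt f G c j l y)
      = Tt f G c k l y - (∑ j, y j * Tt f G c j l y) * (Dp k f y / f y) := by
    have hinner : ∀ j, ∑ m, (gmF f y)⁻¹ j m * (hhm f k m y * Tt f G c j l y)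
        = Tt f G c j l y * (dlt j k - y j * Dp k f y / f y) := by
      intro j
      have hin : ∑ m, (gmF f y)⁻¹ j m * (hhm f k m y * Tt f G c j l y)
          = Tt f G c j l y * (∑ m, (gmF f y)⁻¹ j m * hhm f m k y) := by
        rw [Finset.mul_sum]
        exact Finset.sum_congr rfl fun m _ => by rw [hh_symm hC hy k m]; ring
      rw [hin, ginv_h hC hy j k]
    have hA : ∑ j, Tt f G c j l y * dlt j k = Tt f G c k l y := by
      rw [Finset.sum_congr rfl (fun j (_ : j ∈ Finset.univ) => by rw [dlt_comm j k])]
      exact dlt_mul_collapse (fun j => Tt f G c j l y) k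
    calc ∑ j, ∑ m, (gmF f y)⁻¹ j m * (hhm f k m y * Tt f G c j l y)
        = ∑ j, Tt f G c j l y * (dlt j k - y j * Dp k f y / f y) :=
          Finset.sum_congr rfl fun j _ => hinner j
      _ = ∑ j, (Tt f G c j l y * dlt j k - y j * Tt f G c j l y * (Dp k f y / f y)) :=
          Finset.sum_congr rfl fun j _ => by ring
      _ = (∑ j, Tt f G c j l y * dlt j k)
            - ∑ j, y j * Tt f G c j l y * (Dp k f y / f y) := Finset.sum_sub_distrib ..
      _ = Tt f G c k l y - (∑ j, y j * Tt f G c j l y) * (Dp k f y / f y) := by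
          rw [hA, ← Finset.sum_mul]
  have t3 : ∑ j, ∑ m, (gmF f y)⁻¹ j m * (hhm f j l y * Tt f G c k m y)
      = Tt f G c k l y - (∑ m, y m * Tt f G c m k y) * (Dp l f y / f y) := by
    rw [Finset.sum_comm]
    have hinner : ∀ m, ∑ j, (gmF f y)⁻¹ j m * (hhm f j l y * Tt f G c k m y)
        = Tt f G c k m y * (dlt m l - y m * Dp l f y / f y) := by
      intro m
      have hin : ∑ j, (gmF f y)⁻¹ j m * (hhm f j l y * Tt f G c k m y)
          = Tt f G c k m y * (∑ j, (gmF f y)⁻¹ m j * hhm f j l y) := by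
        rw [Finset.mul_sum]
        exact Finset.sum_congr rfl fun j _ => by rw [ginv_symm hC hy j m]; ring
      rw [hin, ginv_h hC hy m l]
    have hA : ∑ m, Tt f G c k m y * dlt m l = Tt f G c k l y := by
      rw [Finset.sum_congr rfl (fun m (_ : m ∈ Finset.univ) => by rw [dlt_comm m l])]
      exact dlt_mul_collapse (fun m => Tt f G c k m y) l
    calc ∑ m, ∑ j, (gmF f y)⁻¹ j m * (hhm f j l y * Tt f G c k m y)
        = ∑ m, Tt f G c k m y * (dlt m l - y m * Dp l f y / f y) :=
          Finset.sum_congr rfl fun m _ => hinner m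
      _ = ∑ m, (Tt f G c k m y * dlt m l - y m * Tt f G c m k y * (Dp l f y / f y)) := by
          refine Finset.sum_congr rfl fun m _ => ?_
          rw [show Tt f G c m k y = Tt f G c k m y from Tt_symm hC hy m k]
          ring
      _ = (∑ m, Tt f G c k m y * dlt m l)
            - ∑ m, y m * Tt f G c m k y * (Dp l f y / f y) := Finset.sum_sub_distrib ..
      _ = Tt f G c k l y - (∑ m, y m * Tt f G c m k y) * (Dp l f y / f y) := by
          rw [hA, ← Finset.sum_mul]
  have t4 : ∑ j, ∑ m, (gmF f y)⁻¹ j m * (hhm f k l y * Tt f G c j m y)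
      = hhm f k l y * (∑ a, ∑ b, (gmF f y)⁻¹ a b * Tt f G c a b y) := by
    rw [Finset.mul_sum]
    refine Finset.sum_congr rfl fun j _ => ?_
    rw [Finset.mul_sum]
    exact Finset.sum_congr rfl fun m _ => by ring
  have hu1 := u_zero hC hy hrel l
  have hu2 : ∑ m, y m * Tt f G c m k y = 0 := u_zero hC hy hrel k
  rw [t1, t2, t3, t4, hu1, hu2] at hs
  simp only [zero_mul, sub_zero] at hs
  linarith

end Backward

def sigf (f : (Fin n → ℝ) → ℝ) (G : Fin n → (Fin n → ℝ) → ℝ) (c : ℝ) :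
    (Fin n → ℝ) → ℝ :=
  fun z => (∑ a, ∑ b, (gmF f z)⁻¹ a b * Tt f G c a b z) / ((n:ℝ)-1)

section Backward2

variable (hC : Ctx n f G) {y : Fin n → ℝ} (hy : y ∈ Om n) {c : ℝ}
include hC hy

omit hy in
lemma cdOn_hh (a b : Fin n) : ContDiffOn ℝ (⊤ : ℕ∞) (hhm f a b) (Om n) := by
  unfold hhm gg
  exact (contDiffOn_const.mul (cdOn_Dp2 hC.hfsq a b)).sub
    ((cdOn_Dp hC.hf a).mul (cdOn_Dp hC.hf b))

omit hy in
lemma cdOn_sigf (c : ℝ) : ContDiffOn ℝ (⊤ : ℕ∞) (sigf f G c) (Om n) := by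
  unfold sigf
  apply ContDiffOn.div_const
  apply ContDiffOn.sum
  intro a _
  apply ContDiffOn.sum
  intro b _
  exact (cdOn_ginvE hC a b).mul (cdOn_Tt hC c a b)

lemma Tsig (hrel : ∀ z : Fin n → ℝ, z ≠ 0 → ∀ j k l : Fin n,
      Ll f G j k l z + c * f z * Cc f j k l z = 0) (k l : Fin n) :
    Tt f G c k l y = sigf f G c y * hhm f k l y := by
  have h := TlinH hC hy hrel k l
  have h3n : (3:ℝ) ≤ (n:ℝ) := by exact_mod_cast hC.hn
  have hne : (n:ℝ)-1 ≠ 0 := by linarith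
  have h2 : Tt f G c k l y
      = hhm f k l y * ((∑ a, ∑ b, (gmF f y)⁻¹ a b * Tt f G c a b y) / ((n:ℝ)-1)) := by
    rw [mul_div_assoc'] at *
    rw [eq_div_iff hne]
    linarith
  rw [h2]
  unfold sigf
  ring

lemma Eq4 (hrel : ∀ z : Fin n → ℝ, z ≠ 0 → ∀ j k l : Fin n,
      Ll f G j k l z + c * f z * Cc f j k l z = 0) (j k l : Fin n) :
    Dp l (sigf f G c) y * hhm f j k y + 2 * sigf f G c y * Cc f j k l y = 0 := by
  have hf0 : f y ≠ 0 := ne_of_gt (hC.hfpos y hy)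
  have dsig : DifferentiableAt ℝ (sigf f G c) y := diffAt_of_on (cdOn_sigf hC c) hy
  have dhh : DifferentiableAt ℝ (hhm f j k) y := diffAt_of_on (cdOn_hh hC j k) hy
  have hT : Dp l (Tt f G c j k) y
      = sigf f G c y * Dp l (hhm f j k) y + hhm f j k y * Dp l (sigf f G c) y := by
    have h1 : Dp l (Tt f G c j k) y
        = Dp l (fun z => sigf f G c z * hhm f j k z) y :=
      Dp_congr hy (fun z hz => Tsig hC hz hrel j k) l
    rw [h1, Dp_mul dsig dhh]
  have hDlh : Dp l (hhm f j k) y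
      = f y * Dp j (Dp k (Dp l f)) y + Dp j (Dp k f) y * Dp l f y := by
    have h1 : Dp l (hhm f j k) y = Dp l (fun z => f z * Dp j (Dp k f) z) y :=
      Dp_congr hy (fun z hz => hh_eq hC hz j k) l
    rw [h1, Dp_mul (diffAt_of_on hC.hf hy) (diffAt_of_on (cdOn_Dp2 hC.hf j k) hy),
      ← Dp_rot hC.hf hy j k l]
  have hE1 := Eq1 hC hy hrel j k l
  rw [hT, hDlh] at hE1
  rw [Tsig hC hy hrel k l, Tsig hC hy hrel j l] at hE1
  have hCq := C_eq hC hy j k l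
  have hjk := hh_eq hC hy j k
  have hkl := hh_eq hC hy k l
  have hjl := hh_eq hC hy j l
  have hmul : f y * (Dp l (sigf f G c) y * hhm f j k y
      + 2 * sigf f G c y * Cc f j k l y) = 0 := by
    linear_combination hE1 + 2 * sigf f G c y * f y * hCq
      - sigf f G c y * Dp j f y * hkl - sigf f G c y * Dp k f y * hjl
  exact (mul_eq_zero.mp hmul).resolve_left hf0

lemma ysig_zero (hrel : ∀ z : Fin n → ℝ, z ≠ 0 → ∀ j k l : Fin n,
      Ll f G j k l z + c * f z * Cc f j k l z = 0) :
    ∑ l, y l * Dp l (sigf f G c) y = 0 := by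
  by_contra hne
  have hzero : ∀ j k, hhm f j k y = 0 := by
    intro j k
    have hs : ∑ l, y l * (Dp l (sigf f G c) y * hhm f j k y
        + 2 * sigf f G c y * Cc f j k l y) = 0 := by
      rw [Finset.sum_congr rfl (fun l (_ : l ∈ Finset.univ) => by
        rw [Eq4 hC hy hrel j k l, mul_zero])]
      exact Finset.sum_const_zero
    have h1 : ∑ l, y l * (Dp l (sigf f G c) y * hhm f j k y
        + 2 * sigf f G c y * Cc f j k l y)
        = (∑ l, y l * Dp l (sigf f G c) y) * hhm f j k y
          + 2 * sigf f G c y * ∑ l, y l * Cc f j k l y := by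
      calc ∑ l, y l * (Dp l (sigf f G c) y * hhm f j k y
            + 2 * sigf f G c y * Cc f j k l y)
          = ∑ l, (y l * Dp l (sigf f G c) y * hhm f j k y
            + 2 * sigf f G c y * (y l * Cc f j k l y)) :=
            Finset.sum_congr rfl fun l _ => by ring
        _ = (∑ l, y l * Dp l (sigf f G c) y * hhm f j k y)
            + ∑ l, 2 * sigf f G c y * (y l * Cc f j k l y) := Finset.sum_add_distrib
        _ = _ := by rw [← Finset.sum_mul, ← Finset.mul_sum]
    rw [h1, eulerC hC hy j k, mul_zero, add_zero] at hs
    exact (mul_eq_zero.mp hs).resolve_left hne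
  have htr := trace_gh hC hy
  rw [Finset.sum_congr rfl (fun a (_ : a ∈ Finset.univ) =>
    Finset.sum_congr rfl fun b (_ : b ∈ Finset.univ) => by rw [hzero a b, mul_zero])] at htr
  simp only [Finset.sum_const_zero] at htr
  have h3n : (3:ℝ) ≤ (n:ℝ) := by exact_mod_cast hC.hn
  linarith

lemma Cc_perm (j k l : Fin n) : Cc f j k l y = Cc f l k j y := by
  unfold Cc
  rw [Dp_rot hC.hfsq hy j k l, Dp_swap_inner hC.hfsq hy l j k]

lemma sigDl_zero (hrel : ∀ z : Fin n → ℝ, z ≠ 0 → ∀ j k l : Fin n,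
      Ll f G j k l z + c * f z * Cc f j k l z = 0) (l : Fin n) :
    Dp l (sigf f G c) y = 0 := by
  have hsym : ∀ j k, Dp l (sigf f G c) y * hhm f j k y
      = Dp j (sigf f G c) y * hhm f l k y := by
    intro j k
    have h1 := Eq4 hC hy hrel j k l
    have h2 := Eq4 hC hy hrel l k j
    rw [Cc_perm hC hy l k j] at h2
    linarith
  have hs : ∑ j, ∑ k, (gmF f y)⁻¹ j k * (Dp l (sigf f G c) y * hhm f j k y)
      = ∑ j, ∑ k, (gmF f y)⁻¹ j k * (Dp j (sigf f G c) y * hhm f l k y) :=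
    Finset.sum_congr rfl fun j _ => Finset.sum_congr rfl fun k _ => by rw [hsym j k]
  have h1 : ∑ j, ∑ k, (gmF f y)⁻¹ j k * (Dp l (sigf f G c) y * hhm f j k y)
      = ((n:ℝ)-1) * Dp l (sigf f G c) y := by
    rw [← trace_gh hC hy, Finset.sum_mul]
    exact Finset.sum_congr rfl fun j _ => by
      rw [Finset.sum_mul]
      exact Finset.sum_congr rfl fun k _ => by ring
  have h2 : ∑ j, ∑ k, (gmF f y)⁻¹ j k * (Dp j (sigf f G c) y * hhm f l k y)
      = Dp l (sigf f G c) y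
        - (∑ j, y j * Dp j (sigf f G c) y) * (Dp l f y / f y) := by
    have hinner : ∀ j, ∑ k, (gmF f y)⁻¹ j k * (Dp j (sigf f G c) y * hhm f l k y)
        = Dp j (sigf f G c) y * (dlt j l - y j * Dp l f y / f y) := by
      intro j
      have hin : ∑ k, (gmF f y)⁻¹ j k * (Dp j (sigf f G c) y * hhm f l k y)
          = Dp j (sigf f G c) y * (∑ k, (gmF f y)⁻¹ j k * hhm f k l y) := by
        rw [Finset.mul_sum]
        exact Finset.sum_congr rfl fun k _ => by rw [hh_symm hC hy l k]; ring
      rw [hin, ginv_h hC hy j l]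
    have hA : ∑ j, Dp j (sigf f G c) y * dlt j l = Dp l (sigf f G c) y := by
      rw [Finset.sum_congr rfl (fun j (_ : j ∈ Finset.univ) => by rw [dlt_comm j l])]
      exact dlt_mul_collapse (fun j => Dp j (sigf f G c) y) l
    calc ∑ j, ∑ k, (gmF f y)⁻¹ j k * (Dp j (sigf f G c) y * hhm f l k y)
        = ∑ j, Dp j (sigf f G c) y * (dlt j l - y j * Dp l f y / f y) :=
          Finset.sum_congr rfl fun j _ => hinner j
      _ = ∑ j, (Dp j (sigf f G c) y * dlt j l
            - y j * Dp j (sigf f G c) y * (Dp l f y / f y)) :=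
          Finset.sum_congr rfl fun j _ => by ring
      _ = (∑ j, Dp j (sigf f G c) y * dlt j l)
            - ∑ j, y j * Dp j (sigf f G c) y * (Dp l f y / f y) := Finset.sum_sub_distrib ..
      _ = Dp l (sigf f G c) y
            - (∑ j, y j * Dp j (sigf f G c) y) * (Dp l f y / f y) := by
          rw [hA, ← Finset.sum_mul]
  rw [h1, h2, ysig_zero hC hy hrel, zero_mul, sub_zero] at hs
  have h3n : (3:ℝ) ≤ (n:ℝ) := by exact_mod_cast hC.hn
  have hz : ((n:ℝ)-2) * Dp l (sigf f G c) y = 0 := by linarith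
  have hne2 : (n:ℝ)-2 ≠ 0 := by linarith
  exact (mul_eq_zero.mp hz).resolve_left hne2

omit hC hy in
lemma clm_zero_of_single {L : (Fin n → ℝ) →L[ℝ] ℝ}
    (h : ∀ i, L (Pi.single i 1) = 0) : L = 0 := by
  ext v
  show L v = 0
  have hv : L v = L (∑ i, v i • (Pi.single i (1:ℝ) : Fin n → ℝ)) := by
    rw [← basis_expand v]
  rw [hv, map_sum]
  simp [h]

lemma fderiv_sig_zero (hrel : ∀ z : Fin n → ℝ, z ≠ 0 → ∀ j k l : Fin n,
      Ll f G j k l z + c * f z * Cc f j k l z = 0) :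
    fderiv ℝ (sigf f G c) y = 0 :=
  clm_zero_of_single (fun i => sigDl_zero hC hy hrel i)

omit hy in
lemma sig_const (hrel : ∀ z : Fin n → ℝ, z ≠ 0 → ∀ j k l : Fin n,
      Ll f G j k l z + c * f z * Cc f j k l z = 0)
    {z w : Fin n → ℝ} (hz : z ∈ Om n) (hw : w ∈ Om n) :
    sigf f G c z = sigf f G c w := by
  -- `σ` is locally constant
  have hloc : ∀ p ∈ Om n, ∃ ε > (0:ℝ), Metric.ball p ε ⊆ Om n ∧
      ∀ q ∈ Metric.ball p ε, sigf f G c q = sigf f G c p := by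
    intro p hp
    obtain ⟨ε, hε, hball⟩ := Metric.isOpen_iff.mp isOpen_Om p hp
    refine ⟨ε, hε, hball, ?_⟩
    intro q hq
    have hconv : Convex ℝ (Metric.ball p ε) := convex_ball p ε
    have hdiff : DifferentiableOn ℝ (sigf f G c) (Metric.ball p ε) := fun w hw =>
      (diffAt_of_on (cdOn_sigf hC c) (hball hw)).differentiableWithinAt
    have hzero : ∀ x ∈ Metric.ball p ε,
        fderivWithin ℝ (sigf f G c) (Metric.ball p ε) x = 0 := by
      intro x hx
      rw [fderivWithin_of_isOpen Metric.isOpen_ball hx]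
      exact fderiv_sig_zero hC (hball hx) hrel
    exact hconv.is_const_of_fderivWithin_eq_zero hdiff hzero hq (Metric.mem_ball_self hε)
  set σ := sigf f G c with hσ
  set A := {p | p ∈ Om n ∧ σ p = σ z} with hA
  set B := {p | p ∈ Om n ∧ σ p ≠ σ z} with hB
  have hAopen : IsOpen A := by
    rw [Metric.isOpen_iff]
    intro p hp
    obtain ⟨ε, hε, hball, hconst⟩ := hloc p hp.1
    exact ⟨ε, hε, fun q hq => ⟨hball hq, (hconst q hq).trans hp.2⟩⟩
  have hBopen : IsOpen B := by
    rw [Metric.isOpen_iff]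
    intro p hp
    obtain ⟨ε, hε, hball, hconst⟩ := hloc p hp.1
    exact ⟨ε, hε, fun q hq => ⟨hball hq, fun hcq => hp.2 ((hconst q hq).symm.trans hcq)⟩⟩
  have hrank : 1 < Module.rank ℝ (Fin n → ℝ) := by
    rw [rank_fun']
    have : (3:ℕ) ≤ Fintype.card (Fin n) := by simpa using hC.hn
    calc (1 : Cardinal) < (3:ℕ) := by norm_num
      _ ≤ (Fintype.card (Fin n) : Cardinal) := by exact_mod_cast this
  have hOmEq : Om n = {(0 : Fin n → ℝ)}ᶜ := by
    ext p
    simp [Om]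
  have hconn : IsPreconnected (Om n) := by
    rw [hOmEq]
    exact (isConnected_compl_singleton_of_one_lt_rank hrank 0).isPreconnected
  have hsub : Om n ⊆ A ∪ B := by
    intro p hp
    by_cases hcp : σ p = σ z
    · exact Or.inl ⟨hp, hcp⟩
    · exact Or.inr ⟨hp, hcp⟩
  have hdisj : Disjoint A B := by
    rw [Set.disjoint_iff]
    rintro p ⟨⟨_, h1⟩, ⟨_, h2⟩⟩
    exact absurd h1 h2
  have hnonempty : (Om n ∩ A).Nonempty := ⟨z, hz, hz, rfl⟩
  have := hconn.subset_left_of_subset_union hAopen hBopen hdisj hsub hnonempty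
  exact ((this hw).2).symm

lemma Ee_eq_meanB (j k : Fin n) :
    Ee G j k y = (1/2 : ℝ) * ∑ m, Dp j (Dp k (Dp m (G m))) y := by
  have h1 : ∀ z ∈ Om n, Dp k (Sg G) z = ∑ m, Dp k (Dp m (G m)) z := fun z hz =>
    Dp_sum (fun m _ => diffAt_of_on (cdOn_Dp (hC.hG m) m) hz) k
  have h2 : Dp j (Dp k (Sg G)) y
      = Dp j (fun z => ∑ m, Dp k (Dp m (G m)) z) y := Dp_congr hy h1 j
  have h3 : Dp j (fun z => ∑ m, Dp k (Dp m (G m)) z) y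
      = ∑ m, Dp j (Dp k (Dp m (G m))) y :=
    Dp_sum (fun m _ => diffAt_of_on (cdOn_Dp2 (hC.hG m) k m) hy) j
  show (1/2 : ℝ) * Dp j (Dp k (Sg G)) y = _
  rw [h2, h3]

omit hy in
lemma backward_core
    (hrel : ∀ z : Fin n → ℝ, z ≠ 0 → ∀ j k l : Fin n,
      Ll f G j k l z + c * f z * Cc f j k l z = 0) :
    ∃ c' : ℝ, ∀ z : Fin n → ℝ, z ≠ 0 → ∀ j k : Fin n,
      Ee G j k z = (((n:ℝ)+1)/2) * c' * (f z)⁻¹ * hhm f j k z := by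
  have hi0 : (0:ℕ) < n := by have := hC.hn; omega
  set i0 : Fin n := ⟨0, hi0⟩
  set y0 : Fin n → ℝ := Pi.single i0 1 with hy0def
  have hy0 : y0 ∈ Om n := by
    show y0 ≠ 0
    intro h
    have h2 := congrFun h i0
    rw [hy0def] at h2
    simp at h2
  set σ0 : ℝ := sigf f G c y0 with hσ0
  refine ⟨c + 2*σ0/((n:ℝ)+1), ?_⟩
  intro z hz j k
  have hzOm : z ∈ Om n := hz
  have hf0 : f z ≠ 0 := ne_of_gt (hC.hfpos z hz)
  have hne : (n:ℝ)+1 ≠ 0 := by positivity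
  have hTs : Tt f G c j k z = σ0 * hhm f j k z := by
    rw [Tsig hC hzOm hrel j k, sig_const hC hrel hzOm hy0]
  have hEt : f z * Et f G c j k z = σ0 * hhm f j k z := hTs
  have hEe : Ee G j k z = Et f G c j k z + (((n:ℝ)+1)/2)*c*Dp j (Dp k f) z := by
    unfold Et
    ring
  have hhh : Dp j (Dp k f) z = hhm f j k z / f z := by
    rw [eq_div_iff hf0]
    have := hh_eq hC hzOm j k
    linarith
  have hEt2 : Et f G c j k z = σ0 * hhm f j k z / f z := by
    rw [eq_div_iff hf0]
    linarith
  rw [hEe, hEt2, hhh]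
  field_simp
  ring

end Backward2



end Abstract


/-! ### Glue: instantiating the abstract theory for a Finsler metric -/

section Glue

variable {n : ℕ} {U : Set (Fin n → ℝ)} {F : (Fin n → ℝ) → (Fin n → ℝ) → ℝ}

lemma slice_smooth (hF : IsFinslerOn n U F) {x : Fin n → ℝ} (hx : x ∈ U) :
    ContDiffOn ℝ (⊤ : ℕ∞) (F x) (Om n) := by
  have hcomp : ContDiffOn ℝ (⊤ : ℕ∞) ((fun p : (Fin n → ℝ) × (Fin n → ℝ) => F p.1 p.2)
      ∘ (fun y => (x, y))) (Om n) :=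
    hF.smooth.comp ((contDiff_const.prodMk contDiff_id).contDiffOn)
      (fun y hy => ⟨hx, hy⟩)
  exact hcomp

lemma spray_slice_smooth (hF : IsFinslerOn n U F) {x : Fin n → ℝ} (hx : x ∈ U) (i : Fin n) :
    ContDiffOn ℝ (⊤ : ℕ∞) (spray F i x) (Om n) := by
  set V : Set ((Fin n → ℝ) × (Fin n → ℝ)) := U ×ˢ {y : Fin n → ℝ | y ≠ 0} with hVdef
  have hVopen : IsOpen V := hF.isOpen.prod isOpen_ne
  have hΦ : ContDiffOn ℝ (⊤ : ℕ∞) (fun p : (Fin n → ℝ) × (Fin n → ℝ) => (F p.1 p.2)^2) V :=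
    hF.smooth.pow 2
  have hΨ : ∀ m : Fin n, ContDiffOn ℝ (⊤ : ℕ∞)
      (fun p : (Fin n → ℝ) × (Fin n → ℝ) =>
        fderiv ℝ (fun q : (Fin n → ℝ) × (Fin n → ℝ) => (F q.1 q.2)^2) p
          ((Pi.single m 1 : Fin n → ℝ), 0)) V :=
    fun m => (hΦ.fderiv_of_isOpen hVopen (by simp)).clm_apply contDiffOn_const
  have hpdx : ∀ m : Fin n, ∀ x' ∈ U, ∀ y' ∈ Om n, pdx m (Fsq F) x' y'
      = fderiv ℝ (fun q : (Fin n → ℝ) × (Fin n → ℝ) => (F q.1 q.2)^2) (x', y')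
          ((Pi.single m 1 : Fin n → ℝ), 0) := by
    intro m x' hx' y' hy'
    have hmem : ((x', y') : (Fin n → ℝ) × (Fin n → ℝ)) ∈ V := ⟨hx', hy'⟩
    have hΦd : DifferentiableAt ℝ
        (fun q : (Fin n → ℝ) × (Fin n → ℝ) => (F q.1 q.2)^2) (x', y') :=
      (hΦ.contDiffAt (hVopen.mem_nhds hmem)).differentiableAt (by simp)
    have hg : HasFDerivAt (fun w : Fin n → ℝ => (w, y'))
        ((ContinuousLinearMap.id ℝ (Fin n → ℝ)).prod 0) x' :=
      HasFDerivAt.prodMk (hasFDerivAt_id x') (hasFDerivAt_const y' x')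
    have hcomp := hΦd.hasFDerivAt.comp x' hg
    have hfn : (fun x'' => Fsq F x'' y')
        = ((fun q : (Fin n → ℝ) × (Fin n → ℝ) => (F q.1 q.2)^2)
            ∘ (fun w : Fin n → ℝ => (w, y'))) := rfl
    have heq : pdx m (Fsq F) x' y'
        = ((fderiv ℝ (fun q : (Fin n → ℝ) × (Fin n → ℝ) => (F q.1 q.2)^2) (x', y')).comp
            ((ContinuousLinearMap.id ℝ (Fin n → ℝ)).prod 0)) (Pi.single m 1) := by
      show fderiv ℝ (fun x'' => Fsq F x'' y') x' (Pi.single m 1) = _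
      rw [hfn, hcomp.fderiv]
    rw [heq]
    simp
  have hpdxsl : ∀ l : Fin n, ContDiffOn ℝ (⊤ : ℕ∞) (fun y => pdx l (Fsq F) x y) (Om n) := by
    intro l
    have hsl : ContDiffOn ℝ (⊤ : ℕ∞) (fun y =>
        fderiv ℝ (fun q : (Fin n → ℝ) × (Fin n → ℝ) => (F q.1 q.2)^2) (x, y)
          ((Pi.single l 1 : Fin n → ℝ), 0)) (Om n) :=
      (hΨ l).comp ((contDiff_const.prodMk contDiff_id).contDiffOn) (fun y hy => ⟨hx, hy⟩)
    exact hsl.congr (fun y hy => hpdx l x hx y hy)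
  have hpdxy : ∀ l m2 : Fin n,
      ContDiffOn ℝ (⊤ : ℕ∞) (fun y => pdy l (pdx m2 (Fsq F)) x y) (Om n) :=
    fun l m2 => cdOn_Dp (hpdxsl m2) l
  have hfsl : ContDiffOn ℝ (⊤ : ℕ∞) (F x) (Om n) := slice_smooth hF hx
  have hfsq : ContDiffOn ℝ (⊤ : ℕ∞) (fsq (F x)) (Om n) := hfsl.pow 2
  have hggsm : ∀ a b : Fin n, ContDiffOn ℝ (⊤ : ℕ∞) (fun z => gg (F x) a b z) (Om n) :=
    fun a b => contDiffOn_const.mul (cdOn_Dp2 hfsq a b)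
  have hgsym : ∀ z ∈ Om n, ∀ a b : Fin n, gg (F x) a b z = gg (F x) b a z := by
    intro z hz a b
    unfold gg
    rw [Dp_comm hfsq hz a b]
  have hdet : ∀ z ∈ Om n, (gmF (F x) z).det ≠ 0 := by
    intro z hz
    have hpd : (gmF (F x) z).PosDef := by
      rw [Matrix.posDef_iff_dotProduct_mulVec]
      constructor
      · ext a b
        simp only [Matrix.conjTranspose_apply, gmF, Matrix.of_apply, star_trivial]
        exact hgsym z hz b a
      · intro v hv
        have h := hF.posdef x hx z hz v hv
        have heq : dotProduct (star v) (Matrix.mulVec (gmF (F x) z) v)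
            = ∑ a, ∑ b, gg (F x) a b z * v a * v b := by
          show (∑ a, (star v) a * ∑ b, gg (F x) a b z * v b) = _
          refine Finset.sum_congr rfl fun a _ => ?_
          simp only [Pi.star_apply, star_trivial, Finset.mul_sum]
          exact Finset.sum_congr rfl fun b _ => by ring
        show 0 < dotProduct (star v) (Matrix.mulVec (gmF (F x) z) v)
        rw [heq]
        exact h
    exact ne_of_gt hpd.det_pos
  have hginv : ∀ a b : Fin n, ContDiffOn ℝ (⊤ : ℕ∞) (fun z => (gmF (F x) z)⁻¹ a b) (Om n) :=
    fun a b => cdOn_ginv hggsm hdet a b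
  show ContDiffOn ℝ (⊤ : ℕ∞) (fun y => (1/4 : ℝ) * ∑ l, (gmF (F x) y)⁻¹ i l
    * ((∑ m, y m * pdy l (pdx m (Fsq F)) x y) - pdx l (Fsq F) x y)) (Om n)
  refine contDiffOn_const.mul (ContDiffOn.sum fun l _ => (hginv i l).mul ?_)
  refine ContDiffOn.sub (ContDiffOn.sum fun m _ => ?_) (hpdxsl l)
  exact ((ContinuousLinearMap.proj m :
    (Fin n → ℝ) →L[ℝ] ℝ).contDiff.contDiffOn).mul (hpdxy l m)

lemma mkCtx (hn : 3 ≤ n) (hF : IsFinslerOn n U F) (hD : IsDouglas U F)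
    {x : Fin n → ℝ} (hx : x ∈ U) :
    Ctx n (F x) (fun i => spray F i x) := by
  refine ⟨hn, slice_smooth hF hx, fun y hy => hF.pos x hx y hy, ?_,
    fun i => spray_slice_smooth hF hx i, ?_, ?_⟩
  · intro cc hcc y _
    rw [pow_one]
    exact hF.homog x hx y cc hcc
  · intro y hy v hv
    exact hF.posdef x hx y hy v hv
  · intro y hy j i k l
    exact hD x hx y hy j i k l

end Glue


end FinslerAux

end

/-- for a non-Riemannian Douglas metric in dimension `n ≥ 3`,
isotropic mean Berwald curvature is equivalent to relatively isotropic
Landsberg curvature. -/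
theorem douglas_isotropicMeanBerwald_iff_relIsotropicLandsberg
    {n : ℕ} (hn : 3 ≤ n) {U : Set (Fin n → ℝ)}
    {F : (Fin n → ℝ) → (Fin n → ℝ) → ℝ} (hF : IsFinslerOn n U F)
    (hD : IsDouglas U F) (hnonRiem : ¬ IsRiemannian U F) :
    HasIsotropicMeanBerwald U F ↔ HasRelIsotropicLandsberg U F := by
  constructor
  · rintro ⟨c, hiso⟩
    refine ⟨c, ?_⟩
    intro x hx y hy j k l
    have hC := FinslerAux.mkCtx hn hF hD hx
    have hyOm : y ∈ FinslerAux.Om n := hy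
    have habs : ∀ z : Fin n → ℝ, z ≠ 0 → ∀ a b : Fin n,
        FinslerAux.Ee (fun i => spray F i x) a b z
          = (((n:ℝ)+1)/2) * c x * (F x z)⁻¹ * FinslerAux.hhm (F x) a b z := by
      intro z hz a b
      rw [FinslerAux.Ee_eq_meanB hC hz a b]
      exact hiso x hx z hz a b
    exact FinslerAux.forward_core hC hyOm (c x) habs j k l
  · rintro ⟨c, hrel⟩
    classical
    have hex : ∀ x, x ∈ U → ∃ c' : ℝ, ∀ z : Fin n → ℝ, z ≠ 0 → ∀ j k : Fin n,
        FinslerAux.Ee (fun i => spray F i x) j k z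
          = (((n:ℝ)+1)/2) * c' * (F x z)⁻¹ * FinslerAux.hhm (F x) j k z := by
      intro x hx
      have hC := FinslerAux.mkCtx hn hF hD hx
      exact FinslerAux.backward_core hC (c := c x)
        (fun z hz j k l => hrel x hx z hz j k l)
    refine ⟨fun x => if hx : x ∈ U then Classical.choose (hex x hx) else 0, ?_⟩
    intro x hx y hy j k
    have hC := FinslerAux.mkCtx hn hF hD hx
    have hspec := Classical.choose_spec (hex x hx) y hy j k
    have hcc : (fun x => if hx : x ∈ U then Classical.choose (hex x hx) else 0) x
        = Classical.choose (hex x hx) := by simp [hx]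
    rw [hcc]
    calc meanBerwald F j k x y
        = FinslerAux.Ee (fun i => spray F i x) j k y :=
          (FinslerAux.Ee_eq_meanB hC hy j k).symm
      _ = (((n:ℝ)+1)/2) * Classical.choose (hex x hx) * (F x y)⁻¹
            * FinslerAux.hhm (F x) j k y := hspec
      _ = _ := rfl
end
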